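/- arXiv:2604.00635 — 7 statements merged into one kernel-verified Lean document; each statement's English description precedes it below -/
import Mathlib

section
/- Jacobian between sets of roots: let N≥1, t∈ℝ, and let x ∈ A_N(t), where A_N(t) = {x∈ℝ^N_< : the polynomial P_x(λ)−t has N distinct real roots}, with P_x(λ)=∏_{k=1}^N(λ−x_k). Let y^t(x) ∈ ℝ^N_< denote the increasingly ordered roots of P_x − t. Then the map y^t is differentiable at x and the absolute value of the determinant of its differential equals Δ(x)/Δ(y^t(x)), where Δ(x)=∏_{i<j}(x_j−x_i). In particular, for λ⁻ ∈ A_N(4ε_N) with image λ⁺ = y^{4ε_N}(λ⁻) one has |det D_{λ⁻} λ⁺| = Δ(λ⁻)/Δ(λ⁺), and for η ∈ A_N(2ε_N) with image λ⁺ = y^{2ε_N}(η) one has |det D_{η} λ⁺| = Δ(η)/Δ(λ⁺). -/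
/-!
Sample polynomials at the fixed nodes `s k = k` and put `E w = (P_w (s k))ₖ`. Two monic
polynomials of degree `N` that agree at `N` points coincide, so among increasing tuples
`y = y^t(x)` is the unique solution of `E y = E x - t`. The Jacobian of `E` at `w` is
`-(∏_{j ≠ i} (s k - w j))_{k,i}`; multiplied by the Vandermonde matrix of `w` it becomes
diagonal, whence its determinant is `± Δ(s) Δ(w)`. The inverse function theorem for `E` at `y`
gives `D y^t(x) = DE(y)⁻¹ ∘ DE(x)`, and the constant `± Δ(s)` cancels in the determinant.
-/

open MeasureTheory

/-- Vandermonde determinant `Δ(x) = ∏_{i<j} (x_j - x_i)`. -/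
noncomputable def vdm {m : ℕ} (x : Fin m → ℝ) : ℝ :=
  ∏ i : Fin m, ∏ j : Fin m, if i < j then x j - x i else 1

/-- The set `A_N(t)` of strictly increasing `x` such that `P_x − t` has `N` distinct
real roots, where `P_x(λ) = ∏ (λ − x_k)`. -/
def ANt (N : ℕ) (t : ℝ) : Set (Fin N → ℝ) :=
  {x | StrictMono x ∧ ∃ y : Fin N → ℝ, StrictMono y ∧
    ∀ z : ℝ, (∏ k, (z - x k)) - t = ∏ k, (z - y k)}

/-- The map `y^t` sending `x ∈ A_N(t)` to the increasingly ordered roots of `P_x − t`. -/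
noncomputable def rootMap (N : ℕ) (t : ℝ) (x : Fin N → ℝ) : Fin N → ℝ := by
  classical
  exact
    if h : ∃ y : Fin N → ℝ, StrictMono y ∧
        ∀ z : ℝ, (∏ k, (z - x k)) - t = ∏ k, (z - y k)
    then h.choose else x

open Finset Polynomial Lagrange Matrix Function Filter Topology

section Vandermonde

variable {R : Type*} [CommRing R] {n : ℕ}

theorem Matrix.vandermonde_mul_of_coeff (v : Fin n → R) (p : Fin n → R[X])
    (hp : ∀ i, (p i).natDegree < n) :
    vandermonde v * of (fun (m i : Fin n) => (p i).coeff m) = of fun k i => (p i).eval (v k) := by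
  ext k i
  rw [mul_apply, of_apply, eval_eq_sum_range' (hp i), ← Fin.sum_univ_eq_sum_range]
  exact sum_congr rfl fun m _ => by rw [vandermonde_apply, of_apply, mul_comm]

theorem prod_prod_Ioi_neg_one : ∏ i : Fin n, ∏ _j ∈ Ioi i, (-1 : R) = (-1) ^ n.choose 2 := by
  simp only [prod_const, Fin.card_Ioi, prod_pow_eq_pow_sum]
  congr 1
  rw [Fin.sum_univ_eq_sum_range (fun i => n - 1 - i), Nat.choose_two_right,
    ← Finset.sum_range_id, ← sum_range_reflect]
  exact sum_congr rfl fun i hi => by simp at hi; omega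

theorem prod_prod_erase_sub (x : Fin n → R) :
    ∏ i, ∏ j ∈ univ.erase i, (x i - x j) = (-1) ^ n.choose 2 * (vandermonde x).det ^ 2 := by
  have hsplit : ∀ i, ∏ j ∈ univ.erase i, (x i - x j)
      = (∏ j ∈ Iio i, (x i - x j)) * ∏ j ∈ Ioi i, (-1) * (x j - x i) := by
    intro i
    have herase : univ.erase i = Iio i ∪ Ioi i := by ext j; simp [← lt_or_lt_iff_ne]
    rw [herase,
      prod_union (disjoint_left.2 fun j hj hj' => (mem_Iio.1 hj).not_gt (mem_Ioi.1 hj'))]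
    exact congrArg _ (prod_congr rfl fun j _ => by ring)
  have hIio : ∏ i, ∏ j ∈ Iio i, (x i - x j) = (vandermonde x).det := by
    rw [det_vandermonde, prod_comm' (t' := univ) (s' := fun j => Ioi j) (by simp)]
  rw [prod_congr rfl fun i _ => hsplit i, prod_mul_distrib, hIio]
  simp only [prod_mul_distrib, prod_prod_Ioi_neg_one, ← det_vandermonde]
  ring

theorem det_of_eval_nodal_erase [IsDomain R] (s : Fin n → R) {x : Fin n → R}
    (hx : Injective x) :
    (of fun k i => (nodal (univ.erase i) x).eval (s k)).det
      = (-1) ^ n.choose 2 * (vandermonde s).det * (vandermonde x).det := by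
  have hdeg : ∀ i, (nodal (univ.erase i) x).natDegree < n := fun i => by
    rw [natDegree_nodal, card_erase_of_mem (mem_univ i), card_univ, Fintype.card_fin]
    exact Nat.sub_lt i.pos one_pos
  set C := of fun (m i : Fin n) => (nodal (univ.erase i) x).coeff m
  have hdiag : vandermonde x * C = diagonal fun i => ∏ j ∈ univ.erase i, (x i - x j) := by
    rw [vandermonde_mul_of_coeff x _ hdeg]
    ext k i
    rcases eq_or_ne k i with rfl | hki
    · simp [eval_nodal]
    · simpa [eval_nodal, hki] using
        prod_eq_zero (mem_erase.2 ⟨hki, mem_univ k⟩) (sub_self (x k))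
  have hC : C.det = (-1) ^ n.choose 2 * (vandermonde x).det := by
    have h := congrArg det hdiag
    rw [det_mul, det_diagonal, prod_prod_erase_sub] at h
    exact mul_left_cancel₀ (det_vandermonde_ne_zero_iff.2 hx) (h.trans (by ring))
  rw [← vandermonde_mul_of_coeff s _ hdeg, det_mul, hC]
  ring

end Vandermonde

theorem vdm_eq_det_vandermonde {n : ℕ} (x : Fin n → ℝ) : vdm x = (vandermonde x).det := by
  rw [det_vandermonde, vdm]
  refine prod_congr rfl fun i _ => ?_
  rw [← prod_filter]
  exact prod_congr (by ext; simp) fun _ _ => rfl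

theorem vdm_pos {n : ℕ} {x : Fin n → ℝ} (hx : StrictMono x) : 0 < vdm x := by
  rw [vdm_eq_det_vandermonde, det_vandermonde]
  exact prod_pos fun i _ => prod_pos fun j hj => sub_pos.2 (hx (mem_Ioi.1 hj))

section Nodal

variable {R : Type*} [CommRing R] [IsDomain R] {ι : Type*} [Fintype ι]

theorem nodal_sub_C_eq_of_eval_eq {n : ℕ} (hn : 0 < n) {s : Fin n → R} (hs : Injective s)
    {x y : Fin n → R} {t : R}
    (h : ∀ k, (nodal univ x).eval (s k) - t = (nodal univ y).eval (s k)) :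
    nodal univ x - C t = nodal univ y := by
  have hdeg : (C t).degree < (nodal univ x).degree :=
    degree_C_le.trans_lt <| by
      rw [degree_nodal, card_univ, Fintype.card_fin]; exact_mod_cast hn
  have hmonic : (nodal univ x - C t).Monic := nodal_monic.sub_of_left hdeg
  refine eq_of_degree_le_of_eval_index_eq univ hs.injOn ?_ ?_ ?_ fun k _ => by simpa using h k
  · rw [degree_sub_eq_left_of_degree_lt hdeg, degree_nodal]
  · rw [degree_sub_eq_left_of_degree_lt hdeg, degree_nodal, degree_nodal]
  · rw [hmonic.leadingCoeff, nodal_monic.leadingCoeff]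

theorem nodal_sub_C_eq_iff [Infinite R] {x y : ι → R} {t : R} :
    nodal univ x - C t = nodal univ y ↔ ∀ z, (∏ k, (z - x k)) - t = ∏ k, (z - y k) :=
  ⟨fun h z => by simpa [eval_nodal] using congrArg (Polynomial.eval z) h,
    fun h => Polynomial.funext fun z => by simpa [eval_nodal] using h z⟩

theorem eq_of_nodal_eq [LinearOrder R] [LinearOrder ι] {x y : ι → R} (hx : StrictMono x)
    (hy : StrictMono y) (h : nodal univ x = nodal univ y) : x = y := by
  classical
  have hroots : ∀ {v : ι → R}, Injective v → (nodal univ v).roots = (univ.image v).val :=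
    fun hv => by rw [nodal_eq, ← roots_prod_X_sub_C, prod_image hv.injOn]
  have himage : univ.image x = univ.image y :=
    val_inj.1 (by rw [← hroots hx.injective, ← hroots hy.injective, h])
  refine (hx.range_inj hy).1 ?_
  simpa [coe_image] using congrArg ((↑) : Finset R → Set R) himage

end Nodal

theorem rootMap_eq {N : ℕ} {t : ℝ} {x y : Fin N → ℝ} (hy : StrictMono y)
    (h : nodal univ x - C t = nodal univ y) : rootMap N t x = y := by
  have hex : ∃ y', StrictMono y' ∧ ∀ z, (∏ k, (z - x k)) - t = ∏ k, (z - y' k) :=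
    ⟨y, hy, nodal_sub_C_eq_iff.1 h⟩
  unfold rootMap
  rw [dif_pos hex]
  exact eq_of_nodal_eq hex.choose_spec.1 hy
    ((nodal_sub_C_eq_iff.2 hex.choose_spec.2).symm.trans h)

theorem isOpen_setOf_strictMono {ι α : Type*} [Finite ι] [Preorder ι] [TopologicalSpace α]
    [LinearOrder α] [OrderClosedTopology α] : IsOpen {v : ι → α | StrictMono v} := by
  have h : {v : ι → α | StrictMono v} =
      ⋂ p ∈ {p : ι × ι | p.1 < p.2}, {v | v p.1 < v p.2} := by
    ext v; simp [StrictMono]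
  rw [h]
  exact (Set.toFinite _).isOpen_biInter fun p _ =>
    isOpen_lt (continuous_apply _) (continuous_apply _)

section Calculus

variable {𝕜 : Type*} [NontriviallyNormedField 𝕜]

theorem hasStrictFDerivAt_eval_nodal {ι : Type*} [Fintype ι] [DecidableEq ι] (z : 𝕜)
    (x : ι → 𝕜) :
    HasStrictFDerivAt (fun w : ι → 𝕜 => (nodal univ w).eval z)
      (-∑ i, (nodal (univ.erase i) x).eval z • ContinuousLinearMap.proj (R := 𝕜) i) x := by
  simp only [eval_nodal]
  refine (HasStrictFDerivAt.finsetProd fun i _ =>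
    (hasStrictFDerivAt_apply i x).const_sub z).congr_fderiv ?_
  simp [← sum_neg_distrib]

section EvalNodalDeriv

variable [CompleteSpace 𝕜] {n : ℕ}

noncomputable def evalNodalDeriv (s x : Fin n → 𝕜) :
    (Fin n → 𝕜) →L[𝕜] (Fin n → 𝕜) :=
  (Matrix.toLin' (-of fun k i => (nodal (univ.erase i) x).eval (s k))).toContinuousLinearMap

theorem hasStrictFDerivAt_eval_nodal_pi (s x : Fin n → 𝕜) :
    HasStrictFDerivAt (fun (w : Fin n → 𝕜) k => (nodal univ w).eval (s k))
      (evalNodalDeriv s x) x := by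
  refine hasStrictFDerivAt_pi'.2 fun k => (hasStrictFDerivAt_eval_nodal (s k) x).congr_fderiv ?_
  ext v
  simp [evalNodalDeriv, Matrix.mulVec, dotProduct, mul_comm]

theorem det_evalNodalDeriv (s : Fin n → 𝕜) {x : Fin n → 𝕜} (hx : Injective x) :
    (evalNodalDeriv s x).det =
      (-1) ^ (n + 1).choose 2 * (vandermonde s).det * (vandermonde x).det := by
  rw [evalNodalDeriv, ContinuousLinearMap.det, LinearMap.coe_toContinuousLinearMap,
    LinearMap.det_toLin', det_neg, det_of_eval_nodal_erase s hx, Fintype.card_fin,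
    Nat.choose_succ_succ', Nat.choose_one_right, pow_add]
  ring

end EvalNodalDeriv

variable {E F G : Type*} [NormedAddCommGroup E] [NormedSpace 𝕜 E] [CompleteSpace E]
  [NormedAddCommGroup F] [NormedSpace 𝕜 F] [NormedAddCommGroup G] [NormedSpace 𝕜 G]

/-- No continuity of `r` is assumed: uniqueness of preimages in `U` forces `r` to agree near `x`
with the local inverse of `f` composed with `h`. -/
theorem HasStrictFDerivAt.hasFDerivAt_of_unique_preimage {f : E → F} {f' : E ≃L[𝕜] F} {y : E}
    (hf : HasStrictFDerivAt f (f' : E →L[𝕜] F) y) {h : G → F} {h' : G →L[𝕜] F} {x : G}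
    (hh : HasFDerivAt h h' x) (hxy : h x = f y) {r : G → E} {U : Set E} (hU : U ∈ 𝓝 y)
    (hr : ∀ᶠ w in 𝓝 x, ∀ e ∈ U, f e = h w → r w = e) :
    HasFDerivAt r ((f'.symm : F →L[𝕜] E).comp h') x := by
  set g := hf.localInverse f f' y
  have hh_tendsto : Tendsto h (𝓝 x) (𝓝 (f y)) := hxy ▸ hh.continuousAt
  have hgh_tendsto : Tendsto (g ∘ h) (𝓝 x) (𝓝 y) := by
    simpa [g, hf.localInverse_apply_image] using
      hf.localInverse_continuousAt.tendsto.comp hh_tendsto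
  have hrg : r =ᶠ[𝓝 x] g ∘ h := by
    filter_upwards [hr, hgh_tendsto.eventually_mem hU,
      hh_tendsto.eventually hf.eventually_right_inverse] with w hw hwU hfg
    exact hw _ hwU hfg
  have hg : HasFDerivAt g (f'.symm : F →L[𝕜] E) (h x) := hxy ▸ hf.to_localInverse.hasFDerivAt
  exact (hg.comp x hh).congr_of_eventuallyEq hrg

end Calculus

theorem differentiableAt_rootMap_and_abs_det_fderiv {N : ℕ} (hN : 0 < N) {t : ℝ}
    {x : Fin N → ℝ} (hx : x ∈ ANt N t) :
    DifferentiableAt ℝ (rootMap N t) x ∧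
      |LinearMap.det (fderiv ℝ (rootMap N t) x).toLinearMap| = vdm x / vdm (rootMap N t x) := by
  obtain ⟨hxm, y, hym, hxy⟩ := hx
  have hrx : rootMap N t x = y := rootMap_eq hym (nodal_sub_C_eq_iff.2 hxy)
  set s : Fin N → ℝ := fun k => k
  have hs : Injective s := fun a b hab => Fin.ext (Nat.cast_injective hab)
  set c : ℝ := (-1) ^ (N + 1).choose 2 * (vandermonde s).det
  have hc : c ≠ 0 := mul_ne_zero (by simp) (det_vandermonde_ne_zero_iff.2 hs)
  have hdet : ∀ w : Fin N → ℝ, StrictMono w → (evalNodalDeriv s w).det = c * vdm w :=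
    fun w hw => by rw [det_evalNodalDeriv s hw.injective, vdm_eq_det_vandermonde]
  have hdet_y : (evalNodalDeriv s y).det ≠ 0 := by
    rw [hdet y hym]; exact mul_ne_zero hc (vdm_pos hym).ne'
  set Ly := (evalNodalDeriv s y).toContinuousLinearEquivOfDetNeZero hdet_y
  have hderiv :
      HasFDerivAt (rootMap N t) (Ly.symm.toContinuousLinearMap.comp (evalNodalDeriv s x)) x := by
    refine HasStrictFDerivAt.hasFDerivAt_of_unique_preimage
      (by rw [ContinuousLinearMap.coe_toContinuousLinearEquivOfDetNeZero]
          exact hasStrictFDerivAt_eval_nodal_pi s y)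
      ((hasStrictFDerivAt_eval_nodal_pi s x).hasFDerivAt.sub_const fun _ => t) ?_
      (isOpen_setOf_strictMono.mem_nhds hym) (.of_forall fun w e he hwe => ?_)
    · funext k
      simpa [eval_nodal] using hxy (s k)
    · refine rootMap_eq he (nodal_sub_C_eq_of_eval_eq hN hs fun k => ?_)
      simpa using (congrFun hwe k).symm
  refine ⟨hderiv.differentiableAt, ?_⟩
  rw [hderiv.fderiv, ContinuousLinearMap.toLinearMap_comp, LinearMap.det_comp]
  change |Ly.symm.toContinuousLinearMap.det * (evalNodalDeriv s x).det| = _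
  rw [ContinuousLinearEquiv.det_coe_symm,
    ContinuousLinearMap.coe_toContinuousLinearEquivOfDetNeZero, hdet y hym, hdet x hxm, hrx,
    mul_inv, mul_mul_mul_comm, inv_mul_cancel₀ hc, one_mul,
    ← div_eq_inv_mul, abs_of_pos (div_pos (vdm_pos hxm) (vdm_pos hym))]

/-- **Jacobian between sets of roots**: for `x ∈ A_N(t)` the root map `y^t` is
differentiable at `x` with `|det D_x y^t| = Δ(x)/Δ(y^t(x))`.  In particular, for
`λ⁻ ∈ A_N(4 ε_N)` one has `|det D_{λ⁻} λ⁺| = Δ(λ⁻)/Δ(λ⁺)`, and for `η ∈ A_N(2 ε_N)`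
one has `|det D_η λ⁺| = Δ(η)/Δ(λ⁺)`. -/
theorem root_jacobian (N : ℕ) (hN : 1 ≤ N) :
    (∀ t : ℝ, ∀ x ∈ ANt N t,
      DifferentiableAt ℝ (rootMap N t) x ∧
      |LinearMap.det (fderiv ℝ (rootMap N t) x).toLinearMap| =
        vdm x / vdm (rootMap N t x)) ∧
    (∀ ε : ℝ, 0 < ε → ∀ lamm ∈ ANt N (4 * ε),
      |LinearMap.det (fderiv ℝ (rootMap N (4 * ε)) lamm).toLinearMap| =
        vdm lamm / vdm (rootMap N (4 * ε) lamm)) ∧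
    (∀ ε : ℝ, 0 < ε → ∀ eta ∈ ANt N (2 * ε),
      |LinearMap.det (fderiv ℝ (rootMap N (2 * ε)) eta).toLinearMap| =
        vdm eta / vdm (rootMap N (2 * ε) eta)) :=
  ⟨fun _ _ hx => differentiableAt_rootMap_and_abs_det_fderiv hN hx,
    fun _ _ _ hx => (differentiableAt_rootMap_and_abs_det_fderiv hN hx).2,
    fun _ _ _ hx => (differentiableAt_rootMap_and_abs_det_fderiv hN hx).2⟩
end

section
/- Characterisation of the admissible set via critical values: let N≥1, ε_N>0 and λ⁺ ∈ ℝ^N_<. Define P⁺(x)=∏_{k=1}^N(x−λ_k⁺). Then the following are equivalent: (i) the polynomial P⁺ + 4ε_N has N distinct real roots; (ii) there exists a vector η ∈ ℝ^N_< such that, setting P(x)=∏_{k=1}^N(x−η_k) and letting ζ₁,…,ζ_{N−1} ∈ ℝ be the roots of P′, one has |P(ζ_k)| > 2ε_N for all k∈{1,…,N−1} and λ₁⁺,…,λ_N⁺ are exactly the roots of P − 2ε_N. Moreover the vector η in (ii), if it exists, is unique. -/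
/-!
Everything rests on one criterion: for `η` strictly increasing and `P = Pprod η`, the polynomial
`P + c` has `N` simple real roots exactly when, at every critical point `z` of `P`, the numbers `P z` and `P z + c` are nonzero of
the same sign.

If they are, the `N - 1` critical points of `P` (one in each gap between its roots, by Rolle),
flanked by two points far outside, interlace the roots of `P`; on them `P + c` has the sign
`(-1) ^ #{i | x < η i}` of `P`, which alternates, so the intermediate value theorem yields `N`
distinct roots. Conversely, Laguerre's inequality `P' ^ 2 - P P'' > 0`, valid when the roots are
real and simple, makes `P z` and `P'' z` of opposite signs at a critical point; since `P` and
`P + c` share `P''`, the values `P z` and `P z + c` share a sign.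

Applied to `P⁺` with `c = 4ε` and `c = 2ε`, and to `P` with `c = 2ε`, this gives the
equivalence; `η` is unique because it lists the roots of `P⁺ + 2ε` in increasing order.
-/

noncomputable def Pprod {N : ℕ} (eta : Fin N → ℝ) (x : ℝ) : ℝ := ∏ k, (x - eta k)

def EtaCond (N : ℕ) (ε : ℝ) (lam eta : Fin N → ℝ) : Prop :=
  StrictMono eta ∧
  (∀ x : ℝ, Pprod eta x - 2 * ε = ∏ k, (x - lam k)) ∧
  (∀ z : ℝ, deriv (Pprod eta) z = 0 → 2 * ε < |Pprod eta z|)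

open Polynomial Finset

lemma exists_mem_Ioo_eq_zero_of_mul_neg {f : ℝ → ℝ} {a b : ℝ} (hab : a < b)
    (hf : ContinuousOn f (Set.Icc a b)) (h : f a * f b < 0) : ∃ z ∈ Set.Ioo a b, f z = 0 := by
  rcases mul_neg_iff.1 h with ⟨ha, hb⟩ | ⟨ha, hb⟩
  · exact intermediate_value_Ioo' hab.le hf ⟨hb, ha⟩
  · exact intermediate_value_Ioo hab.le hf ⟨ha, hb⟩

lemma exists_strictMono_zeros_of_alternating {m : ℕ} {g : ℝ → ℝ} (hg : Continuous g)
    {t : Fin (m + 1) → ℝ} (ht : StrictMono t)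
    (hsign : ∀ j : Fin (m + 1), 0 < (-1) ^ (m - j : ℕ) * g (t j)) :
    ∃ r : Fin m → ℝ, StrictMono r ∧ ∀ k, g (r k) = 0 := by
  have hzero (k : Fin m) : ∃ z ∈ Set.Ioo (t k.castSucc) (t k.succ), g z = 0 := by
    refine exists_mem_Ioo_eq_zero_of_mul_neg (ht k.castSucc_lt_succ) hg.continuousOn ?_
    have h₁ := hsign k.castSucc
    have h₂ := hsign k.succ
    have hexp : m - k.castSucc = (m - k.succ : ℕ) + 1 := by
      simp only [Fin.val_castSucc, Fin.val_succ]; omega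
    rw [hexp, pow_succ] at h₁
    have hsq : ((-1 : ℝ) ^ (m - k.succ : ℕ)) ^ 2 = 1 := by
      rw [← pow_mul, mul_comm, pow_mul]; norm_num
    nlinarith [mul_pos h₁ h₂]
  choose r hr hr0 using hzero
  refine ⟨r, fun k l hkl => ?_, hr0⟩
  calc r k < t k.succ := (hr k).2
    _ ≤ t l.castSucc := ht.monotone (Fin.succ_le_castSucc_iff.2 hkl)
    _ < r l := (hr l).1

lemma eq_prod_X_sub_C_of_isRoot {K : Type*} [Field K] {p : K[X]} (hp : p.Monic) {m : ℕ}
    (hdeg : p.natDegree = m) {r : Fin m → K} (hr : Function.Injective r)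
    (hroot : ∀ i, p.IsRoot (r i)) : p = ∏ i, (X - C (r i)) :=
  eq_of_monic_of_dvd_of_natDegree_le (monic_prod_X_sub_C _ _) hp
    (Fintype.prod_dvd_of_coprime (pairwise_coprime_X_sub_C hr) fun i => dvd_iff_isRoot.2 (hroot i))
    (by simp [hdeg])

def Interlaces {m : ℕ} (t : Fin (m + 1) → ℝ) (η : Fin m → ℝ) : Prop :=
  ∀ i, t i.castSucc < η i ∧ η i < t i.succ

namespace Interlaces

variable {m : ℕ} {t : Fin (m + 1) → ℝ} {η : Fin m → ℝ}

lemma strictMono (h : Interlaces t η) : StrictMono t :=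
  Fin.strictMono_iff_lt_succ.2 fun i => (h i).1.trans (h i).2

lemma card_lt (h : Interlaces t η) (j : Fin (m + 1)) : #{i | t j < η i} = m - j := by
  have hiff (i : Fin m) : t j < η i ↔ ¬ (i : ℕ) < j := by
    constructor
    · intro hlt hij
      have : i.succ ≤ j := Fin.le_def.2 (by simp only [Fin.val_succ]; omega)
      exact (hlt.trans (h i).2).not_ge (h.strictMono.monotone this)
    · intro hij
      have : j ≤ i.castSucc := Fin.le_def.2 (by simp only [Fin.val_castSucc]; omega)
      exact (h.strictMono.monotone this).trans_lt (h i).1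
  simp_rw [hiff]
  have := card_filter_add_card_filter_not (s := univ) (fun i : Fin m => (i : ℕ) < j)
  rw [Fin.card_filter_val_lt, card_univ, Fintype.card_fin] at this
  omega

end Interlaces

noncomputable def Ppoly {N : ℕ} (η : Fin N → ℝ) : ℝ[X] := ∏ i, (X - C (η i))

section

variable {N : ℕ}

lemma Pprod_eq_eval (η : Fin N → ℝ) : Pprod η = fun x => (Ppoly η).eval x := by
  ext x; simp [Pprod, Ppoly, eval_prod]

lemma continuous_Pprod (η : Fin N → ℝ) : Continuous (Pprod η) := by
  rw [Pprod_eq_eval]; exact (Ppoly η).continuous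

lemma deriv_Pprod (η : Fin N → ℝ) :
    deriv (Pprod η) = fun x => (derivative (Ppoly η)).eval x := by
  ext x; rw [Pprod_eq_eval, Polynomial.deriv]

lemma Ppoly_monic (η : Fin N → ℝ) : (Ppoly η).Monic := monic_prod_X_sub_C _ _

lemma natDegree_Ppoly (η : Fin N → ℝ) : (Ppoly η).natDegree = N := by
  simp [Ppoly]

lemma deriv_Pprod_eq_of_add_eq {η r : Fin N → ℝ} {c : ℝ}
    (h : ∀ x, Pprod η x + c = Pprod r x) : deriv (Pprod r) = deriv (Pprod η) := by
  rw [show Pprod r = fun x => Pprod η x + c from funext fun x => (h x).symm, deriv_add_const']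

lemma Pprod_eq_zero_iff (η : Fin N → ℝ) (x : ℝ) : Pprod η x = 0 ↔ x ∈ Set.range η := by
  simp [Pprod, Finset.prod_eq_zero_iff, sub_eq_zero, eq_comm (a := x)]

lemma neg_one_pow_card_mul_Pprod (η : Fin N → ℝ) (x : ℝ) :
    (-1) ^ #{i | x < η i} * Pprod η x = |Pprod η x| := by
  have : ((-1 : ℝ) ^ #{i | x < η i}) = ∏ i, if x < η i then -1 else 1 := by
    simp [prod_ite]
  rw [this, Pprod, abs_prod, ← prod_mul_distrib]
  refine prod_congr rfl fun i _ => ?_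
  split_ifs with h
  · rw [abs_of_neg (by linarith)]; ring
  · rw [abs_of_nonneg (by linarith)]; ring

lemma neg_one_pow_card_mul_Pprod_add_pos {η : Fin N → ℝ} {x c : ℝ}
    (h : 0 < Pprod η x * (Pprod η x + c) ∨ |c| < |Pprod η x|) :
    0 < (-1) ^ #{i | x < η i} * (Pprod η x + c) := by
  have hs := neg_one_pow_card_mul_Pprod η x
  set s : ℝ := (-1) ^ #{i | x < η i}
  set P := Pprod η x
  have hs1 : |s| = 1 := by simp [s]
  rcases h with h | h
  · have hP : 0 < |P| := abs_pos.2 fun h0 => by simp [h0] at h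
    have hss : s * s = 1 := by rw [← abs_mul_abs_self, hs1, one_mul]
    have : 0 < (s * P) * (s * (P + c)) := by
      calc 0 < P * (P + c) := h
        _ = _ := by linear_combination (-(P * (P + c))) * hss
    exact pos_of_mul_pos_right this (hs ▸ hP.le)
  · have : -|c| ≤ s * c := by simpa [abs_mul, hs1] using neg_abs_le (s * c)
    linarith [mul_add s P c]

lemma StrictMono.eq_of_Pprod_eq {η η' : Fin N → ℝ} (hη : StrictMono η)
    (hη' : StrictMono η') (h : Pprod η = Pprod η') : η = η' := by
  refine (hη.range_inj hη').1 (Set.ext fun x => ?_)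
  rw [← Pprod_eq_zero_iff, ← Pprod_eq_zero_iff, h]

end

section

variable {n : ℕ} {η : Fin (n + 1) → ℝ}

lemma abs_lt_abs_Pprod {x c : ℝ}
    (hx : ∀ i, |c| + 1 ≤ |x - η i|) : |c| < |Pprod η x| := by
  calc |c| < |c| + 1 := lt_add_one _
    _ ≤ (|c| + 1) ^ (n + 1) := le_self_pow₀ (by linarith [abs_nonneg c]) n.succ_ne_zero
    _ = ∏ _i : Fin (n + 1), (|c| + 1) := by simp
    _ ≤ ∏ i, |x - η i| := prod_le_prod (fun _ _ => by positivity) fun i _ => hx i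
    _ = |Pprod η x| := (abs_prod _ _).symm

lemma laguerre_pos (hη : Function.Injective η) (x : ℝ) :
    0 < (derivative (Ppoly η)).eval x ^ 2 -
      (Ppoly η).eval x * (derivative (derivative (Ppoly η))).eval x := by
  induction n with
  | zero => simp [Ppoly]
  | succ n ih =>
    set q := Ppoly (Fin.tail η)
    have hP : Ppoly η = (X - C (η 0)) * q := Fin.prod_univ_succ _
    have key : (derivative (Ppoly η)).eval x ^ 2 -
        (Ppoly η).eval x * (derivative (derivative (Ppoly η))).eval x =
        q.eval x ^ 2 + (x - η 0) ^ 2 * ((derivative q).eval x ^ 2 -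
          q.eval x * (derivative (derivative q)).eval x) := by
      simp only [hP, derivative_mul, derivative_add, derivative_sub, derivative_X, derivative_C,
        derivative_one, derivative_zero, eval_add, eval_mul, eval_sub, eval_X, eval_C, eval_one,
        eval_zero]
      ring
    have ih' := ih (hη.comp (Fin.succ_injective _))
    rw [key]
    rcases eq_or_ne x (η 0) with rfl | hx
    · have : q.eval (η 0) ≠ 0 := by
        simp only [q, Ppoly, eval_prod, eval_sub, eval_X, eval_C, prod_ne_zero_iff, mem_univ,
          sub_ne_zero, forall_const]
        exact fun i => hη.ne (Fin.succ_ne_zero i).symm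
      simp only [sub_self]; positivity
    · have : 0 < (x - η 0) ^ 2 := by positivity
      positivity

lemma Pprod_mul_deriv_deriv_neg (hη : Function.Injective η) {z : ℝ}
    (hz : deriv (Pprod η) z = 0) : Pprod η z * deriv (deriv (Pprod η)) z < 0 := by
  have := laguerre_pos hη z
  rw [deriv_Pprod] at hz ⊢
  rw [Polynomial.deriv, Pprod_eq_eval]
  simp only [hz] at this
  linarith

theorem Pprod_mul_Pprod_add_pos {r : Fin (n + 1) → ℝ} (hη : Function.Injective η)
    (hr : Function.Injective r) {c : ℝ} (h : ∀ x, Pprod η x + c = Pprod r x) {z : ℝ}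
    (hz : deriv (Pprod η) z = 0) : 0 < Pprod η z * (Pprod η z + c) := by
  have hderiv := deriv_Pprod_eq_of_add_eq h
  have hη' := Pprod_mul_deriv_deriv_neg hη hz
  have hr' := Pprod_mul_deriv_deriv_neg hr (hderiv ▸ hz)
  rw [hderiv, ← h] at hr'
  nlinarith [mul_pos_of_neg_of_neg hη' hr', sq_nonneg (deriv (deriv (Pprod η)) z)]

lemma exists_interlaces_deriv_eq_zero_or (hη : StrictMono η) (c : ℝ) :
    ∃ t : Fin (n + 1 + 1) → ℝ, Interlaces t η ∧
      ∀ j, deriv (Pprod η) (t j) = 0 ∨ |c| < |Pprod η (t j)| := by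
  have hrolle (k : Fin n) : ∃ z ∈ Set.Ioo (η k.castSucc) (η k.succ), deriv (Pprod η) z = 0 :=
    exists_deriv_eq_zero (hη k.castSucc_lt_succ) (continuous_Pprod η).continuousOn
      (by rw [((Pprod_eq_zero_iff η _).2 ⟨_, rfl⟩), ((Pprod_eq_zero_iff η _).2 ⟨_, rfl⟩)])
  choose ζ hζ hζ0 using hrolle
  set a := η 0 - (|c| + 1)
  set b := η (Fin.last n) + (|c| + 1)
  have ha (i : Fin (n + 1)) : |c| + 1 ≤ |a - η i| :=
    le_abs.2 (Or.inr (by linarith [hη.monotone (Fin.zero_le i)]))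
  have hb (i : Fin (n + 1)) : |c| + 1 ≤ |b - η i| :=
    le_abs.2 (Or.inl (by linarith [hη.monotone (Fin.le_last i)]))
  refine ⟨Fin.cons a (Fin.snoc ζ b), fun i => ⟨?_, ?_⟩, fun j => ?_⟩
  · cases i using Fin.cases with
    | zero => simp only [Fin.castSucc_zero, Fin.cons_zero, sub_lt_self_iff, a]; positivity
    | succ k => simpa [← Fin.succ_castSucc] using (hζ k).2
  · cases i using Fin.lastCases with
    | last =>
      simp only [Fin.succ_last, Fin.cons_last, Fin.snoc_last, lt_add_iff_pos_right, b]
      positivity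
    | cast k => simpa using (hζ k).1
  · cases j using Fin.cases with
    | zero => exact Or.inr (abs_lt_abs_Pprod ha)
    | succ j =>
      cases j using Fin.lastCases with
      | last => exact Or.inr (by simpa using abs_lt_abs_Pprod hb)
      | cast k => exact Or.inl (by simpa using hζ0 k)

theorem exists_strictMono_Pprod_add_eq (hη : StrictMono η) {c : ℝ}
    (h : ∀ z, deriv (Pprod η) z = 0 → 0 < Pprod η z * (Pprod η z + c)) :
    ∃ r : Fin (n + 1) → ℝ, StrictMono r ∧ ∀ x, Pprod η x + c = Pprod r x := by
  obtain ⟨t, ht, htη⟩ := exists_interlaces_deriv_eq_zero_or hη c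
  obtain ⟨r, hr, hr0⟩ := exists_strictMono_zeros_of_alternating
    ((continuous_Pprod η).add continuous_const) ht.strictMono fun j => by
      rw [← ht.card_lt j]
      exact neg_one_pow_card_mul_Pprod_add_pos ((htη j).imp_left (h _))
  have hfac : Ppoly η + C c = Ppoly r := by
    refine eq_prod_X_sub_C_of_isRoot ((Ppoly_monic η).add_of_left ?_) ?_ hr.injective fun k => ?_
    · rw [degree_eq_natDegree (Ppoly_monic η).ne_zero, natDegree_Ppoly]
      exact degree_C_le.trans_lt (by exact_mod_cast n.succ_pos)
    · rw [natDegree_add_C, natDegree_Ppoly]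
    · simpa [Pprod_eq_eval] using hr0 k
  refine ⟨r, hr, fun x => ?_⟩
  simp [Pprod_eq_eval, ← hfac]

theorem exists_strictMono_Pprod_add_eq_iff (hη : StrictMono η) (c : ℝ) :
    (∃ r : Fin (n + 1) → ℝ, StrictMono r ∧ ∀ x, Pprod η x + c = Pprod r x) ↔
      ∀ z, deriv (Pprod η) z = 0 → 0 < Pprod η z * (Pprod η z + c) :=
  ⟨fun ⟨_, hr, h⟩ _ hz => Pprod_mul_Pprod_add_pos hη.injective hr.injective h hz,
    exists_strictMono_Pprod_add_eq hη⟩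

end

/-- **Characterisation of the admissible set via critical values**, together with
uniqueness of the vector `η`. -/
theorem admissible_characterisation (N : ℕ) (hN : 1 ≤ N) (ε : ℝ) (hε : 0 < ε)
    (lam : Fin N → ℝ) (hlam : StrictMono lam) :
    ((∃ r : Fin N → ℝ, StrictMono r ∧
        ∀ x : ℝ, (∏ k, (x - lam k)) + 4 * ε = ∏ k, (x - r k)) ↔
      ∃ eta : Fin N → ℝ, EtaCond N ε lam eta) ∧
    (∀ eta eta' : Fin N → ℝ, EtaCond N ε lam eta → EtaCond N ε lam eta' → eta = eta') := by
  obtain ⟨n, rfl⟩ : ∃ n, N = n + 1 := ⟨N - 1, by omega⟩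
  refine ⟨⟨fun hroots => ?_, fun ⟨eta, heta, hlam_eta, hcrit⟩ => ?_⟩,
    fun eta eta' h h' => ?_⟩
  · have hcrit := (exists_strictMono_Pprod_add_eq_iff hlam (4 * ε)).1 hroots
    obtain ⟨eta, heta, hlam_eta⟩ :=
      (exists_strictMono_Pprod_add_eq_iff hlam (2 * ε)).2 fun z hz => by
        rcases mul_pos_iff.1 (hcrit z hz) with h | h <;> nlinarith
    refine ⟨eta, heta, fun x => show Pprod eta x - 2 * ε = Pprod lam x from ?_, fun z hz => ?_⟩
    · rw [← hlam_eta]; ring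
    · rw [deriv_Pprod_eq_of_add_eq hlam_eta] at hz
      rw [← hlam_eta, lt_abs]
      rcases mul_pos_iff.1 (hcrit z hz) with h | h
      · left; linarith
      · right; linarith
  · obtain ⟨r, hr, heta_r⟩ :=
      (exists_strictMono_Pprod_add_eq_iff heta (2 * ε)).2 fun z hz => by
        rcases lt_abs.1 (hcrit z hz) with h | h <;> nlinarith
    refine ⟨r, hr, fun x => show Pprod lam x + 4 * ε = Pprod r x from ?_⟩
    linarith [heta_r x, show Pprod eta x - 2 * ε = Pprod lam x from hlam_eta x]
  · refine h.1.eq_of_Pprod_eq h'.1 (funext fun x => ?_)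
    linarith [h.2.1 x, h'.2.1 x]
end

section
/- Critical-value versus derivative inequality: let N≥2 and η ∈ ℝ^N_<, set P(x)=∏_{k=1}^N(x−η_k), and let ζ₁<⋯<ζ_{N−1} be the roots of P′. Then ( min_{1≤k≤N−1} |P(ζ_k)| )^{(N−1)/N} ≤ N · min_{1≤j≤N} |P′(η_j)|. -/
open Finset Polynomial

section PerturbedProduct

variable {ι : Type*} {s : Finset ι}

theorem prod_one_add_le_one {x : ι → ℝ} (hx : ∀ i ∈ s, -1 ≤ x i) (hs : ∑ i ∈ s, x i ≤ 0) :
    ∏ i ∈ s, (1 + x i) ≤ 1 :=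
  calc ∏ i ∈ s, (1 + x i) ≤ ∏ i ∈ s, Real.exp (x i) :=
        prod_le_prod (fun i hi => by linarith [hx i hi])
          fun i _ => by linarith [Real.add_one_le_exp (x i)]
    _ = Real.exp (∑ i ∈ s, x i) := (Real.exp_sum _ _).symm
    _ ≤ 1 := Real.exp_le_one_iff.mpr hs

theorem abs_le_card_of_sum_nonpos {x : ι → ℝ} (hx : ∀ i ∈ s, -1 ≤ x i)
    (hs : ∑ i ∈ s, x i ≤ 0) {i : ι} (hi : i ∈ s) : |x i| ≤ #s := by
  have hle : 1 + x i ≤ ∑ k ∈ s, (1 + x k) :=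
    single_le_sum (f := fun k => 1 + x k) (fun k hk => by linarith [hx k hk]) hi
  rw [sum_add_distrib, sum_const, nsmul_one] at hle
  have hcard : (1 : ℝ) ≤ #s := by exact_mod_cast card_pos.mpr ⟨i, hi⟩
  rw [abs_le]
  constructor <;> linarith [hx i hi]

theorem neg_one_le_div_sub {y c z : ℝ} (h : 0 ≤ (z - y) / (c - y)) :
    -1 ≤ (z - c) / (c - y) := by
  rcases eq_or_ne y c with rfl | hyc
  · simp
  · have : 1 + (z - c) / (c - y) = (z - y) / (c - y) := by
      field_simp [sub_ne_zero.mpr hyc.symm]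
      ring
    linarith

variable {y : ι → ℝ} {c z : ℝ}

theorem sum_div_sub_nonpos (hsum : (z - c) * ∑ i ∈ s, (c - y i)⁻¹ ≤ 0) :
    ∑ i ∈ s, (z - c) / (c - y i) ≤ 0 := by
  simpa only [mul_sum, div_eq_mul_inv] using hsum

theorem abs_prod_sub_le_abs_prod_sub (hy : ∀ i ∈ s, y i ≠ c)
    (hside : ∀ i ∈ s, 0 ≤ (z - y i) / (c - y i)) (hsum : (z - c) * ∑ i ∈ s, (c - y i)⁻¹ ≤ 0) :
    |∏ i ∈ s, (z - y i)| ≤ |∏ i ∈ s, (c - y i)| := by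
  have hfactor : ∏ i ∈ s, (z - y i) =
      (∏ i ∈ s, (c - y i)) * ∏ i ∈ s, (1 + (z - c) / (c - y i)) := by
    rw [← prod_mul_distrib]
    refine prod_congr rfl fun i hi => ?_
    field_simp [sub_ne_zero.mpr (hy i hi).symm]
    ring
  have h1 := prod_one_add_le_one (fun i hi => neg_one_le_div_sub (hside i hi))
    (sum_div_sub_nonpos hsum)
  have h0 : 0 ≤ ∏ i ∈ s, (1 + (z - c) / (c - y i)) :=
    prod_nonneg fun i hi => by linarith [neg_one_le_div_sub (hside i hi)]
  rw [hfactor, abs_mul, abs_of_nonneg h0]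
  exact mul_le_of_le_one_right (abs_nonneg _) h1

theorem abs_sub_le_card_mul_abs_sub (hy : ∀ i ∈ s, y i ≠ c)
    (hside : ∀ i ∈ s, 0 ≤ (z - y i) / (c - y i))
    (hsum : (z - c) * ∑ i ∈ s, (c - y i)⁻¹ ≤ 0) {i : ι} (hi : i ∈ s) :
    |z - c| ≤ #s * |c - y i| := by
  have h := abs_le_card_of_sum_nonpos (fun i hi => neg_one_le_div_sub (hside i hi))
    (sum_div_sub_nonpos hsum) hi
  have hpos : 0 < |c - y i| := abs_pos.mpr (sub_ne_zero.mpr (hy i hi).symm)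
  rwa [abs_div, div_le_iff₀ hpos] at h

end PerturbedProduct

section Pprod

variable {N : ℕ} (eta : Fin N → ℝ)

theorem Pprod_eq_eval_nodal : Pprod eta = fun x => (Lagrange.nodal univ eta).eval x :=
  funext fun _ => Lagrange.eval_nodal.symm

theorem continuous_Pprod_s7 : Continuous (Pprod eta) := by
  rw [Pprod_eq_eval_nodal]
  exact Polynomial.continuous _

theorem Pprod_apply_node (j : Fin N) : Pprod eta (eta j) = 0 :=
  prod_eq_zero (mem_univ j) (sub_self _)

theorem Pprod_eq_mul_prod_erase (j : Fin N) (x : ℝ) :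
    Pprod eta x = (x - eta j) * ∏ i ∈ univ.erase j, (x - eta i) :=
  (mul_prod_erase _ _ (mem_univ j)).symm

theorem deriv_Pprod_s7 (x : ℝ) :
    deriv (Pprod eta) x = (derivative (Lagrange.nodal univ eta)).eval x := by
  rw [Pprod_eq_eval_nodal, Polynomial.deriv]

theorem deriv_Pprod_apply_node (j : Fin N) :
    deriv (Pprod eta) (eta j) = ∏ i ∈ univ.erase j, (eta j - eta i) := by
  rw [deriv_Pprod_s7, Lagrange.eval_nodal_derivative_eval_node_eq (mem_univ j), Lagrange.eval_nodal]

theorem mem_range_of_deriv_Pprod_eq_zero (hN : 1 ≤ N) {zeta : Fin (N - 1) → ℝ}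
    (hzeta : Function.Injective zeta) (hcrit : ∀ k, deriv (Pprod eta) (zeta k) = 0) {x : ℝ}
    (hx : deriv (Pprod eta) x = 0) : x ∈ Set.range zeta := by
  set p := derivative (Lagrange.nodal univ eta)
  have hp : p ≠ 0 := fun h => by
    have := derivative_eq_zero.mp h
    rw [Lagrange.natDegree_nodal, card_univ, Fintype.card_fin] at this
    omega
  have hroots : ∀ x, deriv (Pprod eta) x = 0 → x ∈ p.roots.toFinset := fun x hx => by
    rwa [Multiset.mem_toFinset, mem_roots hp, IsRoot, ← deriv_Pprod_s7]
  have hcard : #p.roots.toFinset ≤ #(univ.image zeta) := calc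
    #p.roots.toFinset ≤ p.natDegree := p.roots.toFinset_card_le.trans (card_roots' p)
    _ ≤ N - 1 := (natDegree_derivative_le _).trans_eq
      (by rw [Lagrange.natDegree_nodal, card_univ, Fintype.card_fin])
    _ = #(univ.image zeta) := by rw [card_image_of_injective _ hzeta, card_univ, Fintype.card_fin]
  have himage : univ.image zeta = p.roots.toFinset :=
    eq_of_subset_of_card_le (fun _ hx => by
      obtain ⟨k, -, rfl⟩ := mem_image.mp hx
      exact hroots _ (hcrit k)) hcard
  simpa [← himage] using hroots x hx

theorem abs_Pprod_pow_le (heta : Function.Injective eta) (j : Fin N) {z : ℝ}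
    (hside : ∀ i, 0 ≤ (z - eta i) / (eta j - eta i))
    (hsum : (z - eta j) * ∑ i ∈ univ.erase j, (eta j - eta i)⁻¹ ≤ 0) :
    |Pprod eta z| ^ (N - 1) ≤ ((N - 1 : ℕ) : ℝ) ^ (N - 1) * |deriv (Pprod eta) (eta j)| ^ N := by
  have hne : ∀ i ∈ univ.erase j, eta i ≠ eta j := fun i hi h => ne_of_mem_erase hi (heta h)
  have hcard : #(univ.erase j) = N - 1 := by
    rw [card_erase_of_mem (mem_univ j), card_univ, Fintype.card_fin]
  have hprod : |∏ i ∈ univ.erase j, (z - eta i)| ≤ |deriv (Pprod eta) (eta j)| := by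
    rw [deriv_Pprod_apply_node]
    exact abs_prod_sub_le_abs_prod_sub hne (fun i _ => hside i) hsum
  have hdist :
      |z - eta j| ^ (N - 1) ≤ ((N - 1 : ℕ) : ℝ) ^ (N - 1) * |deriv (Pprod eta) (eta j)| := by
    rw [deriv_Pprod_apply_node, abs_prod, ← hcard, ← prod_const, ← prod_const, ← prod_mul_distrib]
    exact prod_le_prod (fun _ _ => abs_nonneg _)
      fun i hi => abs_sub_le_card_mul_abs_sub hne (fun i _ => hside i) hsum hi
  calc |Pprod eta z| ^ (N - 1)
      = |z - eta j| ^ (N - 1) * |∏ i ∈ univ.erase j, (z - eta i)| ^ (N - 1) := by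
        rw [Pprod_eq_mul_prod_erase _ j, abs_mul, mul_pow]
    _ ≤ (((N - 1 : ℕ) : ℝ) ^ (N - 1) * |deriv (Pprod eta) (eta j)|) *
          |deriv (Pprod eta) (eta j)| ^ (N - 1) :=
        mul_le_mul hdist (pow_le_pow_left₀ (abs_nonneg _) hprod _) (by positivity) (by positivity)
    _ = ((N - 1 : ℕ) : ℝ) ^ (N - 1) * |deriv (Pprod eta) (eta j)| ^ N := by
        rw [mul_assoc, ← pow_succ', Nat.sub_add_cancel j.pos]

end Pprod

theorem div_sub_nonneg_of_mem_Ioo {a b c y z : ℝ} (hz : z ∈ Set.Ioo a b) (hy : y ∉ Set.Ioo a b)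
    (hc : c = a ∨ c = b) : 0 ≤ (z - y) / (c - y) := by
  rw [Set.mem_Ioo, not_and_or, not_lt, not_lt] at hy
  obtain ⟨hza, hzb⟩ := hz
  rcases hy with hy | hy <;> rcases hc with rfl | rfl
  all_goals first
    | exact div_nonneg (by linarith) (by linarith)
    | exact div_nonneg_of_nonpos (by linarith) (by linarith)

theorem StrictMono.notMem_Ioo_of_val_add_one {N : ℕ} {eta : Fin N → ℝ} (heta : StrictMono eta)
    {i j : Fin N} (hij : i.val + 1 = j.val) (l : Fin N) : eta l ∉ Set.Ioo (eta i) (eta j) := by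
  rintro ⟨hil, hlj⟩
  rcases le_or_gt l i with h | h
  · exact (heta.monotone h).not_gt hil
  · exact (heta.monotone (Fin.le_def.mpr (by omega) : j ≤ l)).not_gt hlj

theorem exists_deriv_Pprod_eq_zero_beside {N : ℕ} (hN : 2 ≤ N) {eta : Fin N → ℝ}
    (heta : StrictMono eta) (j : Fin N) :
    ∃ z, deriv (Pprod eta) z = 0 ∧ (∀ i, 0 ≤ (z - eta i) / (eta j - eta i)) ∧
      (z - eta j) * ∑ i ∈ univ.erase j, (eta j - eta i)⁻¹ ≤ 0 := by
  have hne : (univ.erase j).Nonempty := by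
    rw [← card_pos, card_erase_of_mem (mem_univ j), card_univ, Fintype.card_fin]
    omega
  rcases le_or_gt (∑ i ∈ univ.erase j, (eta j - eta i)⁻¹) 0 with hS | hS
  · have hj : j.val + 1 < N := by
      by_contra! hlast
      refine hS.not_gt (sum_pos (fun i hi => inv_pos.mpr (sub_pos.mpr (heta ?_))) hne)
      exact lt_of_le_of_ne (Fin.le_def.mpr (by omega)) (ne_of_mem_erase hi)
    set k : Fin N := ⟨j.val + 1, hj⟩
    obtain ⟨z, hz, hcrit⟩ :=
      exists_deriv_eq_zero (heta (show j < k from Fin.lt_def.mpr (by simp [k])))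
        (continuous_Pprod_s7 eta).continuousOn
        ((Pprod_apply_node eta j).trans (Pprod_apply_node eta k).symm)
    exact ⟨z, hcrit, fun i => div_sub_nonneg_of_mem_Ioo hz (heta.notMem_Ioo_of_val_add_one rfl i)
      (Or.inl rfl), mul_nonpos_of_nonneg_of_nonpos (sub_nonneg.mpr hz.1.le) hS⟩
  · have hj : 1 ≤ j.val := by
      by_contra! hfirst
      refine hS.not_gt (sum_neg (fun i hi => inv_lt_zero.mpr (sub_neg.mpr (heta ?_))) hne)
      exact lt_of_le_of_ne (Fin.le_def.mpr (by omega)) (ne_of_mem_erase hi).symm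
    set k : Fin N := ⟨j.val - 1, by omega⟩
    obtain ⟨z, hz, hcrit⟩ :=
      exists_deriv_eq_zero (heta (show k < j from Fin.lt_def.mpr (by simp [k]; omega)))
        (continuous_Pprod_s7 eta).continuousOn
        ((Pprod_apply_node eta k).trans (Pprod_apply_node eta j).symm)
    exact ⟨z, hcrit, fun i => div_sub_nonneg_of_mem_Ioo hz
      (heta.notMem_Ioo_of_val_add_one (by simp [k]; omega) i) (Or.inr rfl),
      mul_nonpos_of_nonpos_of_nonneg (sub_nonpos.mpr hz.2.le) hS.le⟩

theorem rpow_sub_one_div_le_of_pow_le {m a : ℝ} {N : ℕ} (hm : 0 ≤ m) (ha : 0 ≤ a) (hN : 1 ≤ N)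
    (h : m ^ (N - 1) ≤ a ^ N) : m ^ (((N : ℝ) - 1) / N) ≤ a := calc
  m ^ (((N : ℝ) - 1) / N) = (m ^ (N - 1)) ^ ((N : ℝ)⁻¹) := by
    rw [← Real.rpow_natCast, ← Real.rpow_mul hm, Nat.cast_sub hN, Nat.cast_one, div_eq_mul_inv]
  _ ≤ (a ^ N) ^ ((N : ℝ)⁻¹) := by gcongr
  _ = a := Real.pow_rpow_inv_natCast ha (by omega)

/-- **Critical-value versus derivative inequality**:
`(min_k |P(ζ_k)|)^{(N−1)/N} ≤ N · min_j |P′(η_j)|`, where `ζ₁ < ⋯ < ζ_{N−1}` are the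
roots of `P′`. -/
theorem crit_value_vs_derivative (N : ℕ) (hN : 2 ≤ N) (eta : Fin N → ℝ)
    (heta : StrictMono eta) (zeta : Fin (N - 1) → ℝ) (hzeta : StrictMono zeta)
    (hcrit : ∀ k, deriv (Pprod eta) (zeta k) = 0) :
    (⨅ k : Fin (N - 1), |Pprod eta (zeta k)|) ^ (((N : ℝ) - 1) / N) ≤
      N * ⨅ j : Fin N, |deriv (Pprod eta) (eta j)| := by
  have : Nonempty (Fin N) := ⟨⟨0, by omega⟩⟩
  obtain ⟨j, hj⟩ :=
    exists_eq_ciInf_of_finite (f := fun j : Fin N => |deriv (Pprod eta) (eta j)|)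
  obtain ⟨z, hz, hside, hsum⟩ := exists_deriv_Pprod_eq_zero_beside hN heta j
  obtain ⟨k, rfl⟩ := mem_range_of_deriv_Pprod_eq_zero eta (by omega) hzeta.injective hcrit hz
  rw [← hj]
  refine rpow_sub_one_div_le_of_pow_le (Real.iInf_nonneg fun _ => abs_nonneg _) (by positivity)
    (by omega) ?_
  calc (⨅ k, |Pprod eta (zeta k)|) ^ (N - 1) ≤ |Pprod eta (zeta k)| ^ (N - 1) :=
        pow_le_pow_left₀ (Real.iInf_nonneg fun _ => abs_nonneg _)
          (ciInf_le (Set.finite_range _).bddBelow k) _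
    _ ≤ ((N - 1 : ℕ) : ℝ) ^ (N - 1) * |deriv (Pprod eta) (eta j)| ^ N :=
        abs_Pprod_pow_le eta heta.injective j hside hsum
    _ ≤ (N : ℝ) ^ N * |deriv (Pprod eta) (eta j)| ^ N := by
        gcongr
        exact_mod_cast (Nat.pow_le_pow_left (Nat.sub_le N 1) _).trans
          (Nat.pow_le_pow_right (by omega) (Nat.sub_le N 1))
    _ = (N * |deriv (Pprod eta) (eta j)|) ^ N := (mul_pow _ _ _).symm
end

section
/- Geometric-mean bound on consecutive derivative values: let N≥2 and η ∈ ℝ^N_<, set P(x)=∏_{k=1}^N(x−η_k), and let ζ_k be the unique critical point of P in the interval (η_k, η_{k+1}). Then for every k∈{1,…,N−1}: √( |P′(η_k)·P′(η_{k+1})| ) ≤ 4·|P(ζ_k)| / (η_{k+1}−η_k). -/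
def inclL {N : ℕ} (j : Fin (N - 1)) : Fin N := ⟨j.1, lt_of_lt_of_le j.2 (Nat.sub_le N 1)⟩
def inclR {N : ℕ} (j : Fin (N - 1)) : Fin N := ⟨j.1 + 1, by have := j.2; omega⟩

/-!
Write `P(x) = (x - a)(x - b) Q(x)` with `a = η_k`, `b = η_{k+1}`, so that `P'(a) = (a - b) Q(a)`,
`P'(b) = (b - a) Q(b)`, and `P'(ζ) = 0` pins down the logarithmic derivative
`Q'(ζ)/Q(ζ) = 1/(b - ζ) - 1/(ζ - a)`. No root of `Q` lies in `[a, b]`, where `log |Q|` is a sum of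
concave functions `log |x - η_j|`; hence `|Q|` stays below the exponential of its logarithmic
tangent line at `ζ`. At `a` and `b` this gives, with `α = ζ - a` and `β = b - ζ`,
`|Q(a) Q(b)| ≤ Q(ζ)² exp(2 - α/β - β/α)`, and the claim reduces to `(u + 4)² ≤ 16 eᵘ` for
`u = (α - β)²/(αβ) ≥ 0`.
-/

open Real Finset Set

lemma abs_le_abs_mul_exp_sub_div {y z : ℝ} (h : 0 < y * z) : |z| ≤ |y| * exp ((z - y) / y) := by
  have hy : y ≠ 0 := by rintro rfl; simp at h
  have hratio : 0 < z / y := by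
    rw [show z / y = y * z / y ^ 2 by field_simp]
    positivity
  calc |z| = |y| * (z / y) := by rw [← abs_of_pos hratio, ← abs_mul, mul_div_cancel₀ _ hy]
    _ ≤ |y| * exp ((z - y) / y) := by
      gcongr
      linarith [add_one_le_exp ((z - y) / y), show (z - y) / y = z / y - 1 by field_simp]

lemma sq_add_four_le_sixteen_mul_exp {u : ℝ} (hu : 0 ≤ u) : (u + 4) ^ 2 ≤ 16 * exp u :=
  calc (u + 4) ^ 2 ≤ 16 * (u / 2 + 1) ^ 2 := by nlinarith
    _ ≤ 16 * exp (u / 2) ^ 2 := by gcongr; linarith [add_one_le_exp (u / 2)]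
    _ = 16 * exp u := by rw [← exp_nat_mul]; ring_nf

lemma add_pow_four_mul_exp_le {α β : ℝ} (hα : 0 < α) (hβ : 0 < β) :
    (α + β) ^ 4 * exp (2 - α / β - β / α) ≤ 16 * (α * β) ^ 2 := by
  have hexp : 2 - α / β - β / α = -((α - β) ^ 2 / (α * β)) := by field_simp; ring
  have hpow : (α + β) ^ 4 = (α * β) ^ 2 * ((α - β) ^ 2 / (α * β) + 4) ^ 2 := by field_simp; ring
  have hu : 0 ≤ (α - β) ^ 2 / (α * β) := by positivity
  generalize (α - β) ^ 2 / (α * β) = u at hexp hpow hu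
  rw [hexp, hpow, exp_neg, mul_assoc, ← div_eq_mul_inv, mul_comm 16]
  gcongr
  rw [div_le_iff₀ (exp_pos u)]
  exact sq_add_four_le_sixteen_mul_exp hu

lemma sq_add_mul_le_of_le_sq_mul_exp {α β q M : ℝ} (hα : 0 < α) (hβ : 0 < β)
    (hq : q ≤ M ^ 2 * exp (2 - α / β - β / α)) :
    (α + β) ^ 2 * q ≤ (4 * (α * β * M) / (α + β)) ^ 2 := by
  rw [div_pow, le_div_iff₀ (by positivity)]
  calc (α + β) ^ 2 * q * (α + β) ^ 2 = (α + β) ^ 4 * q := by ring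
    _ ≤ (α + β) ^ 4 * exp (2 - α / β - β / α) * M ^ 2 := by
      rw [mul_assoc, mul_comm (exp _)]
      gcongr
    _ ≤ 16 * (α * β) ^ 2 * M ^ 2 := by gcongr ?_ * _; exact add_pow_four_mul_exp_le hα hβ
    _ = (4 * (α * β * M)) ^ 2 := by ring

lemma mul_sub_pos_of_notMem_Icc {a b c x y : ℝ} (hc : c ∉ Icc a b) (hx : x ∈ Icc a b)
    (hy : y ∈ Icc a b) : 0 < (x - c) * (y - c) := by
  rcases not_and_or.1 hc with h | h <;> rw [not_le] at h
  · exact mul_pos (by linarith [hx.1]) (by linarith [hy.1])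
  · exact mul_pos_of_neg_of_neg (by linarith [hx.2]) (by linarith [hy.2])

lemma logDeriv_sub_const (c x : ℝ) : logDeriv (fun y => y - c) x = (x - c)⁻¹ := by
  simp [logDeriv_apply]

lemma deriv_sub_mul_self {g : ℝ → ℝ} {a : ℝ} (hg : DifferentiableAt ℝ g a) :
    deriv (fun x => (x - a) * g x) a = g a := by
  simpa using (((hasDerivAt_id a).sub_const a).fun_mul hg.hasDerivAt).deriv

section ProdSub

variable {ι : Type*} (s : Finset ι) (η : ι → ℝ) {P : ℝ → ℝ} {a b x ζ : ℝ}

lemma logDeriv_prod_sub (hx : ∀ j ∈ s, x ≠ η j) :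
    logDeriv (fun y => ∏ j ∈ s, (y - η j)) x = ∑ j ∈ s, (x - η j)⁻¹ := by
  rw [logDeriv_prod (fun j hj => sub_ne_zero.2 (hx j hj)) (fun j _ => by fun_prop)]
  exact sum_congr rfl fun j _ => logDeriv_sub_const (η j) x

lemma abs_prod_sub_le_mul_exp (h : ∀ j ∈ s, 0 < (ζ - η j) * (x - η j)) :
    |∏ j ∈ s, (x - η j)| ≤ |∏ j ∈ s, (ζ - η j)| * exp ((x - ζ) * ∑ j ∈ s, (ζ - η j)⁻¹) := by
  rw [abs_prod, abs_prod, mul_sum, exp_sum, ← prod_mul_distrib]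
  refine prod_le_prod (fun _ _ => abs_nonneg _) fun j hj => ?_
  have hj := abs_le_abs_mul_exp_sub_div (h j hj)
  rwa [sub_sub_sub_cancel_right, div_eq_mul_inv] at hj

lemma sum_inv_sub_eq_of_deriv_eq_zero (hP : ∀ x, P x = (x - a) * (x - b) * ∏ j ∈ s, (x - η j))
    (ha : ζ ≠ a) (hb : ζ ≠ b) (hs : ∀ j ∈ s, ζ ≠ η j) (hcrit : deriv P ζ = 0) :
    ∑ j ∈ s, (ζ - η j)⁻¹ = -(ζ - a)⁻¹ - (ζ - b)⁻¹ := by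
  have hlog : logDeriv P ζ = 0 := by rw [logDeriv_apply, hcrit, zero_div]
  rw [funext hP, logDeriv_mul (f := fun x => (x - a) * (x - b)) _ _
      (prod_ne_zero_iff.2 fun j hj => sub_ne_zero.2 (hs j hj)) (by fun_prop) (by fun_prop),
    logDeriv_mul (f := fun x => x - a) (g := fun x => x - b) _ (sub_ne_zero.2 ha)
      (sub_ne_zero.2 hb) (by fun_prop) (by fun_prop),
    logDeriv_sub_const, logDeriv_sub_const, logDeriv_prod_sub s η hs] at hlog
  · linarith
  · exact mul_ne_zero (sub_ne_zero.2 ha) (sub_ne_zero.2 hb)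

lemma abs_prod_sub_mul_abs_prod_sub_le
    (hP : ∀ x, P x = (x - a) * (x - b) * ∏ j ∈ s, (x - η j))
    (hζ : ζ ∈ Ioo a b) (hη : ∀ j ∈ s, η j ∉ Icc a b) (hcrit : deriv P ζ = 0) :
    |∏ j ∈ s, (a - η j)| * |∏ j ∈ s, (b - η j)| ≤
      |∏ j ∈ s, (ζ - η j)| ^ 2 * exp (2 - (ζ - a) / (b - ζ) - (b - ζ) / (ζ - a)) := by
  obtain ⟨hza, hzb⟩ := hζ
  have hab : a ≤ b := (hza.trans hzb).le
  have hS := sum_inv_sub_eq_of_deriv_eq_zero s η hP hza.ne' hzb.ne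
    (fun j hj h => hη j hj (h ▸ ⟨hza.le, hzb.le⟩)) hcrit
  have hexp : (a - ζ) * ∑ j ∈ s, (ζ - η j)⁻¹ + (b - ζ) * ∑ j ∈ s, (ζ - η j)⁻¹ =
      2 - (ζ - a) / (b - ζ) - (b - ζ) / (ζ - a) := by
    rw [hS, show ζ - b = -(b - ζ) by ring, inv_neg]
    field_simp
    ring
  have hbound := fun x (hx : x ∈ Icc a b) => abs_prod_sub_le_mul_exp s η
    fun j hj => mul_sub_pos_of_notMem_Icc (hη j hj) ⟨hza.le, hzb.le⟩ hx
  calc _ ≤ _ := mul_le_mul (hbound a ⟨le_rfl, hab⟩) (hbound b ⟨hab, le_rfl⟩)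
        (abs_nonneg _) (by positivity)
    _ = _ := by rw [← hexp, exp_add]; ring

theorem sqrt_abs_deriv_mul_deriv_le (hP : ∀ x, P x = (x - a) * (x - b) * ∏ j ∈ s, (x - η j))
    (hζ : ζ ∈ Ioo a b) (hη : ∀ j ∈ s, η j ∉ Icc a b) (hcrit : deriv P ζ = 0) :
    √|deriv P a * deriv P b| ≤ 4 * |P ζ| / (b - a) := by
  have hα : 0 < ζ - a := sub_pos.2 hζ.1
  have hβ : 0 < b - ζ := sub_pos.2 hζ.2
  have hderiv_a : deriv P a = (a - b) * ∏ j ∈ s, (a - η j) := by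
    rw [show P = fun x => (x - a) * ((x - b) * ∏ j ∈ s, (x - η j)) by ext; rw [hP, mul_assoc]]
    exact deriv_sub_mul_self (by fun_prop)
  have hderiv_b : deriv P b = (b - a) * ∏ j ∈ s, (b - η j) := by
    rw [show P = fun x => (x - b) * ((x - a) * ∏ j ∈ s, (x - η j)) by ext; rw [hP]; ring]
    exact deriv_sub_mul_self (by fun_prop)
  have hPζ : |P ζ| = (ζ - a) * (b - ζ) * |∏ j ∈ s, (ζ - η j)| := by
    rw [hP, abs_mul, abs_mul, abs_of_pos hα, abs_of_neg (by linarith : ζ - b < 0), neg_sub]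
  rw [sqrt_le_left (div_nonneg (by positivity) (by linarith)), hderiv_a, hderiv_b, abs_mul,
    abs_mul, abs_mul, ← neg_sub b a, abs_neg, abs_of_pos (by linarith : 0 < b - a), hPζ,
    show b - a = (ζ - a) + (b - ζ) by ring, mul_mul_mul_comm, ← sq]
  exact sq_add_mul_le_of_le_sq_mul_exp hα hβ
    (abs_prod_sub_mul_abs_prod_sub_le s η hP hζ hη hcrit)

end ProdSub
lemma Pprod_eq_sub_mul_sub_mul_prod {N : ℕ} (eta : Fin N → ℝ) {i j : Fin N} (hij : i ≠ j)
    (x : ℝ) :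
    Pprod eta x = (x - eta i) * (x - eta j) * ∏ l ∈ (univ.erase i).erase j, (x - eta l) := by
  rw [Pprod, ← mul_prod_erase _ _ (mem_univ i),
    ← mul_prod_erase _ _ (mem_erase.2 ⟨hij.symm, mem_univ j⟩), mul_assoc]

lemma inclL_lt_inclR {N : ℕ} (k : Fin (N - 1)) : inclL k < inclR k := by
  simp [Fin.lt_def, inclL, inclR]

lemma StrictMono.notMem_Icc_inclL_inclR {N : ℕ} {eta : Fin N → ℝ} (heta : StrictMono eta)
    (k : Fin (N - 1)) {l : Fin N} (hL : l ≠ inclL k) (hR : l ≠ inclR k) :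
    eta l ∉ Icc (eta (inclL k)) (eta (inclR k)) := by
  have hLR : (inclR k : ℕ) = inclL k + 1 := rfl
  rcases lt_or_gt_of_ne hL with h | h
  · exact fun hl => (heta h).not_ge hl.1
  · have h' : inclR k < l := by
      rw [Fin.lt_def] at h ⊢
      have := Fin.val_ne_of_ne hR
      omega
    exact fun hl => (heta h').not_ge hl.2

theorem geometric_mean_derivative_bound_general (N : ℕ) (eta : Fin N → ℝ)
    (heta : StrictMono eta) (k : Fin (N - 1)) (zeta : ℝ)
    (hmem : zeta ∈ Set.Ioo (eta (inclL k)) (eta (inclR k)))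
    (hcrit : deriv (Pprod eta) zeta = 0) :
    Real.sqrt |deriv (Pprod eta) (eta (inclL k)) * deriv (Pprod eta) (eta (inclR k))| ≤
      4 * |Pprod eta zeta| / (eta (inclR k) - eta (inclL k)) := by
  refine sqrt_abs_deriv_mul_deriv_le _ eta
    (Pprod_eq_sub_mul_sub_mul_prod eta (inclL_lt_inclR k).ne) hmem (fun l hl => ?_) hcrit
  rw [mem_erase, mem_erase] at hl
  exact heta.notMem_Icc_inclL_inclR k hl.2.1 hl.1

/-- **Geometric-mean bound on consecutive derivative values**:
`√(|P′(η_k) P′(η_{k+1})|) ≤ 4 |P(ζ_k)| / (η_{k+1} − η_k)`, where `ζ_k` is the unique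
critical point of `P` in `(η_k, η_{k+1})`. -/
theorem geometric_mean_derivative_bound (N : ℕ) (hN : 2 ≤ N) (eta : Fin N → ℝ)
    (heta : StrictMono eta) (k : Fin (N - 1)) (zeta : ℝ)
    (hmem : zeta ∈ Set.Ioo (eta (inclL k)) (eta (inclR k)))
    (hcrit : deriv (Pprod eta) zeta = 0) :
    Real.sqrt |deriv (Pprod eta) (eta (inclL k)) * deriv (Pprod eta) (eta (inclR k))| ≤
      4 * |Pprod eta zeta| / (eta (inclR k) - eta (inclL k)) :=
  geometric_mean_derivative_bound_general N eta heta k zeta hmem hcrit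
end

section
/- Almost negative definiteness of the logarithmic interaction matrix on the zero-sum hyperplane: let γ>1. There exists a constant C>0 (depending only on γ) such that for every N≥2 and every η∈ℝ^N with |η_a−η_b| ≥ N^{−γ} for all a≠b, the N×N matrix M with entries M_{kj} = (1/N)·ln|η_k−η_j| for k≠j and M_{kk}=0 satisfies ⟨x, M x⟩ ≤ C·(ln N / N)·‖x‖² for all x∈ℝ^N with ∑_{k=1}^N x_k = 0, where ⟨·,·⟩ is the standard Euclidean inner product and ‖·‖ the Euclidean norm. -/
/-!
For `t ≥ δ > 0`, `log t = log δ - 1 + ∫_δ^∞ min t s / s² ds`, and each kernel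
`min |a - b| s = s - |(a, a + s] ∩ (b, b + s]|` is conditionally negative definite, being a
constant minus a Gram matrix of indicator functions. The separation hypothesis makes the
representation of `log |η_k - η_j|` valid off the diagonal with `δ = N^{-γ}`, so on the zero-sum
hyperplane the logarithmic form is at most `(1 - log δ) ‖x‖² = (1 + γ log N) ‖x‖²`.
-/

open MeasureTheory Set

section

variable {ι : Type*} [Fintype ι]

theorem sum_sum_mul_mul_const (x : ι → ℝ) (c : ℝ) :
    ∑ k, ∑ j, x k * x j * c = c * (∑ k, x k) ^ 2 := by
  rw [sq, Finset.sum_mul_sum, Finset.mul_sum]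
  exact Finset.sum_congr rfl fun k _ => by rw [Finset.mul_sum]; simp only [mul_comm c]

theorem integral_indicator_Ioc_mul_indicator_Ioc (a b s : ℝ) :
    ∫ u, (Ioc a (a + s)).indicator 1 u * (Ioc b (b + s)).indicator (1 : ℝ → ℝ) u
      = max (s - |a - b|) 0 := by
  have hlen : a ⊓ b + s - a ⊔ b = s - |a - b| := by
    linarith [max_sub_min_eq_abs b a, max_comm a b, min_comm a b]
  calc _ = ∫ u, (Ioc (a ⊔ b) (a ⊓ b + s)).indicator (1 : ℝ → ℝ) u := by
        rw [← min_add_add_right, ← Ioc_inter_Ioc, inter_indicator_one]; rfl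
    _ = max (s - |a - b|) 0 := by
        rw [integral_indicator_one measurableSet_Ioc, Real.volume_real_Ioc, hlen]

theorem sum_mul_mul_max_sub_abs_sub_nonneg (x η : ι → ℝ) (s : ℝ) :
    0 ≤ ∑ k, ∑ j, x k * x j * max (s - |η k - η j|) 0 := by
  set f : ι → ℝ → ℝ := fun k => (Ioc (η k) (η k + s)).indicator 1
  have hint : ∀ k j, Integrable fun u => x k * x j * (f k u * f j u) := fun k j => by
    refine Integrable.const_mul ?_ _
    rw [show (fun u => f k u * f j u) = (Ioc (η k) (η k + s) ∩ Ioc (η j) (η j + s)).indicator 1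
      by rw [inter_indicator_one]; rfl]
    refine (integrableOn_const ?_).integrable_indicator (measurableSet_Ioc.inter measurableSet_Ioc)
    exact (measure_mono inter_subset_left).trans_lt measure_Ioc_lt_top |>.ne
  calc 0 ≤ ∫ u, (∑ k, x k * f k u) ^ 2 := integral_nonneg fun u => sq_nonneg _
    _ = ∫ u, ∑ k, ∑ j, x k * x j * (f k u * f j u) := by
      congr 1; funext u
      rw [sq, Finset.sum_mul_sum]
      exact Finset.sum_congr rfl fun k _ => Finset.sum_congr rfl fun j _ => by ring
    _ = ∑ k, ∑ j, ∫ u, x k * x j * (f k u * f j u) := by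
      rw [integral_finsetSum _ fun k _ => integrable_finsetSum _ fun j _ => hint k j]
      exact Finset.sum_congr rfl fun k _ => integral_finsetSum _ fun j _ => hint k j
    _ = ∑ k, ∑ j, x k * x j * max (s - |η k - η j|) 0 := by
      simp_rw [integral_const_mul, f, integral_indicator_Ioc_mul_indicator_Ioc]

theorem sum_mul_mul_min_abs_sub_nonpos (x η : ι → ℝ) (hx : ∑ k, x k = 0) (s : ℝ) :
    ∑ k, ∑ j, x k * x j * min |η k - η j| s ≤ 0 := by
  have hmin : ∀ t : ℝ, min t s = s - max (s - t) 0 := fun t => by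
    rcases le_total t s with h | h
    · rw [min_eq_left h, max_eq_left (by linarith)]; ring
    · rw [min_eq_right h, max_eq_right (by linarith)]; ring
  simp_rw [hmin, mul_sub, Finset.sum_sub_distrib, sum_sum_mul_mul_const, hx]
  linarith [sum_mul_mul_max_sub_abs_sub_nonneg x η s]

theorem integrableOn_Ioi_min_div_sq {δ t : ℝ} (hδ : 0 < δ) (ht : 0 ≤ t) :
    IntegrableOn (fun s => min t s / s ^ 2) (Ioi δ) := by
  refine ((integrableOn_Ioi_rpow_of_lt (by norm_num : (-2 : ℝ) < -1) hδ).const_mul t).mono' ?_ ?_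
  · refine ContinuousOn.aestronglyMeasurable ?_ measurableSet_Ioi
    exact (continuous_const.min continuous_id).continuousOn.div (continuous_pow 2).continuousOn
      fun s hs => pow_ne_zero 2 (hδ.trans hs).ne'
  · refine (ae_restrict_iff' measurableSet_Ioi).2 (.of_forall fun s hs => ?_)
    have hs₀ : 0 < s := hδ.trans hs
    rw [Real.rpow_neg hs₀.le, Real.rpow_two, Real.norm_of_nonneg (by positivity), div_eq_mul_inv]
    exact mul_le_mul_of_nonneg_right (min_le_left _ _) (by positivity)

theorem integral_Ioi_min_div_sq {δ t : ℝ} (hδ : 0 < δ) (ht : δ ≤ t) :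
    ∫ s in Ioi δ, min t s / s ^ 2 = Real.log t - Real.log δ + 1 := by
  have ht₀ : 0 < t := hδ.trans_le ht
  have hf := integrableOn_Ioi_min_div_sq hδ ht₀.le
  rw [← Ioc_union_Ioi_eq_Ioi ht, setIntegral_union Ioc_disjoint_Ioi_same measurableSet_Ioi
    (hf.mono_set Ioc_subset_Ioi_self) (hf.mono_set (Ioi_subset_Ioi ht))]
  have hnear : ∫ s in Ioc δ t, min t s / s ^ 2 = Real.log t - Real.log δ := by
    rw [setIntegral_congr_fun measurableSet_Ioc (g := fun s => s⁻¹) fun s hs => by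
      rw [min_eq_right hs.2, sq, div_mul_cancel_left₀ (hδ.trans hs.1).ne']]
    rw [← intervalIntegral.integral_of_le ht, integral_inv_of_pos hδ ht₀,
      Real.log_div ht₀.ne' hδ.ne']
  have hfar : ∫ s in Ioi t, min t s / s ^ 2 = 1 := by
    rw [setIntegral_congr_fun measurableSet_Ioi (g := fun s => t * s ^ (-2 : ℝ)) fun s hs => by
      beta_reduce
      rw [min_eq_left (le_of_lt hs), Real.rpow_neg (ht₀.trans hs).le, Real.rpow_two,
        div_eq_mul_inv]]
    rw [integral_const_mul, integral_Ioi_rpow_of_lt (by norm_num) ht₀]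
    norm_num [Real.rpow_neg_one, ht₀.ne']
  rw [hnear, hfar]

theorem integral_Ioi_min_zero_div_sq {δ : ℝ} (hδ : 0 ≤ δ) :
    ∫ s in Ioi δ, min 0 s / s ^ 2 = 0 :=
  setIntegral_eq_zero_of_forall_eq_zero fun s hs => by
    rw [min_eq_left (hδ.trans (le_of_lt hs)), zero_div]

theorem sum_mul_mul_integral_Ioi_min_abs_sub_nonpos (x η : ι → ℝ) (hx : ∑ k, x k = 0)
    {δ : ℝ} (hδ : 0 < δ) :
    ∑ k, ∑ j, x k * x j * ∫ s in Ioi δ, min |η k - η j| s / s ^ 2 ≤ 0 := by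
  have hint : ∀ k j, IntegrableOn (fun s => x k * x j * (min |η k - η j| s / s ^ 2)) (Ioi δ) :=
    fun k j => (integrableOn_Ioi_min_div_sq hδ (abs_nonneg _)).const_mul _
  simp_rw [← integral_const_mul]
  rw [Finset.sum_congr rfl fun k _ => (integral_finsetSum _ fun j _ => hint k j).symm,
    ← integral_finsetSum _ fun k _ => integrable_finsetSum _ fun j _ => hint k j]
  refine setIntegral_nonpos measurableSet_Ioi fun s _ => ?_
  simp_rw [← mul_div_assoc, ← Finset.sum_div]
  exact div_nonpos_of_nonpos_of_nonneg (sum_mul_mul_min_abs_sub_nonpos x η hx s) (sq_nonneg s)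

theorem sum_mul_mul_ite_log_abs_sub_le [DecidableEq ι] (x η : ι → ℝ) (hx : ∑ k, x k = 0)
    {δ : ℝ} (hδ : 0 < δ) (hsep : ∀ k j, k ≠ j → δ ≤ |η k - η j|) :
    ∑ k, ∑ j, x k * x j * (if k = j then 0 else Real.log |η k - η j|)
      ≤ (1 - Real.log δ) * ∑ k, x k ^ 2 := by
  have hsplit : ∀ k j, x k * x j * (if k = j then 0 else Real.log |η k - η j|)
      = x k * x j * (∫ s in Ioi δ, min |η k - η j| s / s ^ 2) + x k * x j * (Real.log δ - 1)
        - if k = j then (Real.log δ - 1) * x k ^ 2 else 0 := fun k j => by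
    by_cases h : k = j
    · subst h
      rw [if_pos rfl, if_pos rfl, sub_self, abs_zero, integral_Ioi_min_zero_div_sq hδ.le]
      ring
    · rw [if_neg h, if_neg h, integral_Ioi_min_div_sq hδ (hsep k j h)]
      ring
  simp_rw [hsplit, Finset.sum_sub_distrib, Finset.sum_add_distrib, sum_sum_mul_mul_const, hx,
    Finset.sum_ite_eq, Finset.mem_univ, if_true, ← Finset.mul_sum]
  linarith [sum_mul_mul_integral_Ioi_min_abs_sub_nonpos x η hx hδ]

end

/-- **Almost negative definiteness of the logarithmic interaction matrix on the zero-sum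
hyperplane**: for `γ > 1` there is `C > 0` such that for all `N ≥ 2` and all `η` with
pairwise gaps at least `N^{−γ}`, the matrix `M_{kj} = (1/N)·ln|η_k − η_j|` (zero diagonal)
satisfies `⟨x, Mx⟩ ≤ C (ln N / N) ‖x‖²` on `{x : ∑ x_k = 0}`. -/
theorem log_matrix_almost_negative (γ : ℝ) (hγ : 1 < γ) :
    ∃ C : ℝ, 0 < C ∧ ∀ N : ℕ, 2 ≤ N → ∀ eta : Fin N → ℝ,
      (∀ a b : Fin N, a ≠ b → (N : ℝ) ^ (-γ) ≤ |eta a - eta b|) →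
      ∀ x : Fin N → ℝ, (∑ k, x k) = 0 →
        (∑ k, ∑ j, x k * (if k = j then 0 else (1 / N) * Real.log |eta k - eta j|) * x j) ≤
          C * (Real.log N / N) * ∑ k, (x k) ^ 2 := by
  refine ⟨γ + 2, by linarith, fun N hN eta hsep x hx => ?_⟩
  have hN₀ : (0 : ℝ) < N := by positivity
  have hlogN : 1 / 2 ≤ Real.log N := by
    have := Real.log_le_log (by norm_num) (by exact_mod_cast hN : (2 : ℝ) ≤ N)
    linarith [Real.log_two_gt_d9]
  have hform := sum_mul_mul_ite_log_abs_sub_le x eta hx (Real.rpow_pos_of_pos hN₀ (-γ)) hsep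
  rw [Real.log_rpow hN₀] at hform
  calc ∑ k, ∑ j, x k * (if k = j then 0 else 1 / N * Real.log |eta k - eta j|) * x j
      = (∑ k, ∑ j, x k * x j * (if k = j then 0 else Real.log |eta k - eta j|)) / N := by
        simp_rw [Finset.sum_div]
        refine Finset.sum_congr rfl fun k _ => Finset.sum_congr rfl fun j _ => ?_
        split_ifs <;> ring
    _ ≤ (γ + 2) * Real.log N * (∑ k, x k ^ 2) / N := by
        gcongr
        refine hform.trans ?_
        gcongr
        linarith
    _ = (γ + 2) * (Real.log N / N) * ∑ k, x k ^ 2 := by ring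
end

section
/- Determinant lower bound for the compression of a positive diagonal matrix to the zero-sum hyperplane: let N≥2 and let D = diag(Λ₁,…,Λ_N) with Λ_k > 0 for all k. Let w₁,…,w_{N−1} be any orthonormal basis of the hyperplane V⁰_N = {x∈ℝ^N : ∑_k x_k = 0}, and let D|_{V⁰} be the (N−1)×(N−1) matrix with entries ⟨w_a, D w_b⟩. Then det(D|_{V⁰}) ≥ (Λ₁·Λ₂·⋯·Λ_N)^{(N−1)/N}. (The determinant is independent of the chosen orthonormal basis.) -/
/-!
Complete the rows `w_a` by `u = (1, …, 1)/√N` to an orthogonal matrix `Q`. Then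
`S = Q D Qᵀ` has determinant `∏ Λ_k` and inverse `Q D⁻¹ Qᵀ`, and Jacobi's complementary minor
identity gives `det (D|_{V⁰}) = det S · ⟨u, D⁻¹ u⟩ = (∏ Λ_k) · (1/N) ∑ Λ_k⁻¹`. By AM–GM the mean
of the `Λ_k⁻¹` is at least `(∏ Λ_k)^{-1/N}`.
-/

open Matrix Finset

namespace Matrix

theorem toBlocks₁₁_fromRows_mul_mul_transpose {m m' n R : Type*} [Fintype n] [Semiring R]
    (A : Matrix m n R) (B : Matrix m' n R)
    (D : Matrix n n R) : (fromRows A B * D * (fromRows A B)ᵀ).toBlocks₁₁ = A * D * Aᵀ := by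
  rw [fromRows_mul, transpose_fromRows, fromRows_mul_fromCols, toBlocks_fromBlocks₁₁]

theorem toBlocks₂₂_fromRows_mul_mul_transpose {m m' n R : Type*} [Fintype n] [Semiring R]
    (A : Matrix m n R) (B : Matrix m' n R)
    (D : Matrix n n R) : (fromRows A B * D * (fromRows A B)ᵀ).toBlocks₂₂ = B * D * Bᵀ := by
  rw [fromRows_mul, transpose_fromRows, fromRows_mul_fromCols, toBlocks_fromBlocks₂₂]

variable {m n R : Type*} [Fintype m] [Fintype n] [DecidableEq m] [DecidableEq n] [CommRing R]

/-- Jacobi's complementary minor identity. -/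
theorem det_toBlocks₁₁_eq_det_mul_det_toBlocks₂₂ {S T : Matrix (m ⊕ n) (m ⊕ n) R}
    (h : S * T = 1) : S.toBlocks₁₁.det = S.det * T.toBlocks₂₂.det := by
  rw [← fromBlocks_toBlocks S, ← fromBlocks_toBlocks T, fromBlocks_multiply,
    ← fromBlocks_one, fromBlocks_inj] at h
  obtain ⟨-, h₁₂, -, h₂₂⟩ := h
  calc S.toBlocks₁₁.det = (fromBlocks S.toBlocks₁₁ 0 S.toBlocks₂₁ 1).det := by
        rw [det_fromBlocks_zero₁₂, det_one, mul_one]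
    _ = (S * fromBlocks 1 T.toBlocks₁₂ 0 T.toBlocks₂₂).det := by
        conv_rhs => rw [← fromBlocks_toBlocks S]
        rw [fromBlocks_multiply, h₁₂, h₂₂]
        simp
    _ = S.det * T.toBlocks₂₂.det := by
        rw [det_mul, det_fromBlocks_zero₂₁, det_one, one_mul]

variable {Q : Matrix m n R}

theorem det_mul_mul_transpose_of_mul_transpose_eq_one (e : m ≃ n) (hQ : Q * Qᵀ = 1)
    (D : Matrix n n R) : (Q * D * Qᵀ).det = D.det := by
  set P := Q.submatrix e.symm id
  have hP : Pᵀ * P = 1 := by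
    rw [transpose_submatrix, submatrix_mul_equiv _ _ _ e.symm, submatrix_id_id,
      ← mul_eq_one_comm_of_equiv e, hQ]
  have hconj : (Q * D * Qᵀ).submatrix e.symm e.symm = P * D * Pᵀ := by
    rw [submatrix_mul _ _ _ id _ Function.bijective_id, submatrix_mul _ _ _ id _
      Function.bijective_id, transpose_submatrix, submatrix_id_id]
  rw [← det_submatrix_equiv_self e.symm, hconj, Matrix.mul_assoc, det_mul_comm,
    Matrix.mul_assoc, hP, Matrix.mul_one]

theorem mul_mul_transpose_mul_mul_mul_transpose_eq_one (e : m ≃ n) (hQ : Q * Qᵀ = 1)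
    {D E : Matrix n n R} (h : D * E = 1) : Q * D * Qᵀ * (Q * E * Qᵀ) = 1 := by
  have hQ' : Qᵀ * Q = 1 := (mul_eq_one_comm_of_equiv e).mp hQ
  calc Q * D * Qᵀ * (Q * E * Qᵀ) = Q * D * (Qᵀ * Q) * E * Qᵀ := by simp only [Matrix.mul_assoc]
    _ = 1 := by rw [hQ', Matrix.mul_one, Matrix.mul_assoc Q, h, Matrix.mul_one, hQ]

end Matrix

theorem Real.prod_rpow_neg_inv_card_le_sum_inv_div_card {ι : Type*} [Fintype ι] [Nonempty ι]
    {x : ι → ℝ} (hx : ∀ i, 0 < x i) :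
    (∏ i, x i) ^ (-(Fintype.card ι : ℝ)⁻¹) ≤ (∑ i, (x i)⁻¹) / Fintype.card ι := by
  have h := Real.geom_mean_le_arith_mean univ (fun _ => 1) (fun i => (x i)⁻¹)
    (fun _ _ => zero_le_one) (by simp [Fintype.card_pos]) (fun i _ => (inv_pos.2 (hx i)).le)
  simp only [Real.rpow_one, sum_const, card_univ, nsmul_eq_mul, mul_one, one_mul,
    prod_inv_distrib] at h
  rwa [Real.rpow_neg (prod_pos fun i _ => hx i).le, ← Real.inv_rpow (prod_pos fun i _ => hx i).le]

noncomputable def unitOnesRow (n : Type*) [Fintype n] : Matrix Unit n ℝ :=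
  of fun _ _ => (√(Fintype.card n))⁻¹

section Compression

variable {m n : Type*} [Fintype n]

theorem unitOnesRow_mul_transpose [Nonempty n] : unitOnesRow n * (unitOnesRow n)ᵀ = 1 := by
  have hn : (0 : ℝ) < Fintype.card n := by exact_mod_cast Fintype.card_pos
  ext
  simp [unitOnesRow, mul_apply, ← mul_inv, Real.mul_self_sqrt hn.le, hn.ne']

theorem det_unitOnesRow_mul_diagonal_mul_transpose [DecidableEq n] (d : n → ℝ) :
    (unitOnesRow n * diagonal d * (unitOnesRow n)ᵀ).det = (∑ k, d k) / Fintype.card n := by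
  rw [det_unique, mul_apply, sum_div]
  refine sum_congr rfl fun k _ => ?_
  rw [mul_diagonal, transpose_apply, unitOnesRow, of_apply, mul_right_comm, ← mul_inv,
    Real.mul_self_sqrt (Nat.cast_nonneg _), inv_mul_eq_div]

theorem fromRows_unitOnesRow_mul_transpose [DecidableEq m] [Nonempty n] {W : Matrix m n ℝ}
    (hW : W * Wᵀ = 1) (hsum : ∀ a, ∑ k, W a k = 0) :
    fromRows W (unitOnesRow n) * (fromRows W (unitOnesRow n))ᵀ = 1 := by
  rw [transpose_fromRows, fromRows_mul_fromCols, hW, unitOnesRow_mul_transpose, ← fromBlocks_one]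
  congr <;> ext <;> simp [unitOnesRow, mul_apply, ← sum_mul, ← mul_sum, hsum]

theorem det_mul_diagonal_mul_transpose_of_sum_eq_zero [Fintype m] [DecidableEq m]
    [DecidableEq n] (e : m ⊕ Unit ≃ n) {W : Matrix m n ℝ}
    (hW : W * Wᵀ = 1) (hsum : ∀ a, ∑ k, W a k = 0) {Λ : n → ℝ} (hΛ : ∀ k, Λ k ≠ 0) :
    (W * diagonal Λ * Wᵀ).det = (∏ k, Λ k) * ((∑ k, (Λ k)⁻¹) / Fintype.card n) := by
  have : Nonempty n := ⟨e (.inr ())⟩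
  have hQ := fromRows_unitOnesRow_mul_transpose hW hsum
  have hΛinv : diagonal Λ * diagonal Λ⁻¹ = 1 := by
    rw [diagonal_mul_diagonal, ← diagonal_one]
    exact congrArg diagonal (funext fun k => mul_inv_cancel₀ (hΛ k))
  have h := det_toBlocks₁₁_eq_det_mul_det_toBlocks₂₂
    (mul_mul_transpose_mul_mul_mul_transpose_eq_one e hQ hΛinv)
  rwa [det_mul_mul_transpose_of_mul_transpose_eq_one e hQ, det_diagonal,
    toBlocks₁₁_fromRows_mul_mul_transpose, toBlocks₂₂_fromRows_mul_mul_transpose,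
    det_unitOnesRow_mul_diagonal_mul_transpose] at h

end Compression

/-- **Determinant lower bound for the compression of a positive diagonal matrix to the
zero-sum hyperplane**: if `w₁,…,w_{N−1}` is an orthonormal basis of
`V⁰_N = {x : ∑ x_k = 0}` and `D = diag(Λ₁,…,Λ_N)` with `Λ_k > 0`, then
`det(⟨w_a, D w_b⟩) ≥ (Λ₁⋯Λ_N)^{(N−1)/N}`. -/
theorem diag_compression_det_lower_bound (N : ℕ) (hN : 2 ≤ N) (Λ : Fin N → ℝ)
    (hΛ : ∀ k, 0 < Λ k) (w : Fin (N - 1) → Fin N → ℝ)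
    (hzero : ∀ a, (∑ k, w a k) = 0)
    (hortho : ∀ a b, (∑ k, w a k * w b k) = if a = b then (1 : ℝ) else 0) :
    (∏ k, Λ k) ^ (((N : ℝ) - 1) / N) ≤
      Matrix.det (Matrix.of fun a b : Fin (N - 1) => ∑ k, w a k * Λ k * w b k) := by
  have hNpos : (0 : ℝ) < N := by norm_cast; omega
  have hprod : 0 < ∏ k, Λ k := prod_pos fun k _ => hΛ k
  have : Nonempty (Fin N) := ⟨⟨0, by omega⟩⟩
  have hW : of w * (of w)ᵀ = 1 := by
    ext a b
    simp [mul_apply, one_apply, hortho]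
  have hcompr : of w * diagonal Λ * (of w)ᵀ = of fun a b => ∑ k, w a k * Λ k * w b k := by
    ext a b
    simp [mul_apply, diagonal]
  have hdet := det_mul_diagonal_mul_transpose_of_sum_eq_zero
    (Fintype.equivOfCardEq (by simp; omega)) hW hzero fun k => (hΛ k).ne'
  rw [← hcompr, hdet, Fintype.card_fin]
  calc (∏ k, Λ k) ^ (((N : ℝ) - 1) / N) = (∏ k, Λ k) * (∏ k, Λ k) ^ (-(N : ℝ)⁻¹) := by
        rw [sub_div, div_self hNpos.ne', one_div, sub_eq_add_neg, Real.rpow_add hprod,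
          Real.rpow_one]
    _ ≤ (∏ k, Λ k) * ((∑ k, (Λ k)⁻¹) / N) := by
        gcongr
        simpa using Real.prod_rpow_neg_inv_card_le_sum_inv_div_card hΛ
end

section
/- Explicit inverse of the triangular interpolation matrix: let N≥1 and let x∈ℝ^N have pairwise distinct entries. Define the N×N matrix A(x) by A(x)_{ij} = ∏_{m=i, m≠j}^{N} 1/(x_j − x_m) if i ≤ j, and A(x)_{ij} = 0 if i > j (empty products equal 1). Then A(x) is invertible, and its inverse is given by (A(x)^{−1})_{ij} = ∏_{k=j+1}^{N} (x_i − x_k) if i ≤ j, and 0 if i > j (empty products equal 1). -/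
open Finset

open Polynomial in
private lemma leadingCoeff_basisDivisor {F : Type*} [Field F] {x y : F} :
    (Lagrange.basisDivisor x y).leadingCoeff = (x - y)⁻¹ := by
  unfold Lagrange.basisDivisor
  rw [leadingCoeff_mul, leadingCoeff_C, (monic_X_sub_C y).leadingCoeff, mul_one]

open Polynomial in
private lemma coeff_basis {F : Type*} [Field F] {ι : Type*} [DecidableEq ι] {s : Finset ι}
    {v : ι → F} {i : ι} (hvs : Set.InjOn v s) (hi : i ∈ s) :
    (Lagrange.basis s v i).coeff (#s - 1) = ∏ j ∈ s.erase i, (v i - v j)⁻¹ := by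
  rw [← Lagrange.natDegree_basis hvs hi, coeff_natDegree]
  unfold Lagrange.basis
  rw [leadingCoeff_prod]
  exact Finset.prod_congr rfl fun j _ => leadingCoeff_basisDivisor

open Polynomial in
private lemma divdiff {F : Type*} [Field F] {ι : Type*} [DecidableEq ι] {s : Finset ι}
    {v : ι → F} (hvs : Set.InjOn v s) (f : F[X]) (hf : f.degree < #s) :
    ∑ l ∈ s, f.eval (v l) * ∏ m ∈ s.erase l, (v l - v m)⁻¹ = f.coeff (#s - 1) := by
  conv_rhs => rw [Lagrange.eq_interpolate hvs hf]
  rw [Lagrange.interpolate_apply, finset_sum_coeff]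
  exact Finset.sum_congr rfl fun l hl => by
    rw [coeff_C_mul, coeff_basis hvs hl]

/-- The triangular interpolation matrix
`A(x)_{ij} = ∏_{m=i, m≠j}^{N} 1/(x_j − x_m)` for `i ≤ j`, and `0` otherwise. -/
noncomputable def triA (N : ℕ) (x : Fin N → ℝ) : Matrix (Fin N) (Fin N) ℝ :=
  Matrix.of fun i j : Fin N =>
    if i ≤ j then ∏ m ∈ univ.filter (fun m : Fin N => i ≤ m ∧ m ≠ j), (x j - x m)⁻¹ else 0

/-- The claimed inverse: `B_{ij} = ∏_{k=j+1}^{N} (x_i − x_k)` for `i ≤ j`, `0` otherwise. -/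
noncomputable def triB (N : ℕ) (x : Fin N → ℝ) : Matrix (Fin N) (Fin N) ℝ :=
  Matrix.of fun i j : Fin N =>
    if i ≤ j then ∏ k ∈ univ.filter (fun k : Fin N => j < k), (x i - x k) else 0

/-- **Explicit inverse of the triangular interpolation matrix**: for `x` with pairwise
distinct entries, `A(x)` is invertible with inverse `B`. -/
theorem triangular_interpolation_inverse (N : ℕ) (x : Fin N → ℝ)
    (hx : Function.Injective x) :
    triA N x * triB N x = 1 ∧ triB N x * triA N x = 1 := by
  have key : triA N x * triB N x = 1 := by
    ext i j
    rw [Matrix.mul_apply, Matrix.one_apply]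
    set f := Lagrange.nodal (Ioi j) x with hf
    have hterm : ∀ l, triA N x i l * triB N x l j =
        if i ≤ l then f.eval (x l) * ∏ m ∈ (Ici i).erase l, (x l - x m)⁻¹ else 0 := by
      intro l
      have hfilter : univ.filter (fun m : Fin N => i ≤ m ∧ m ≠ l) = (Ici i).erase l := by
        ext m; simp [Finset.mem_erase, and_comm]
      have hIoi : univ.filter (fun k : Fin N => j < k) = Ioi j := by
        ext k; simp
      simp only [triA, triB, Matrix.of_apply, hfilter, hIoi]
      by_cases hil : i ≤ l
      · simp only [if_pos hil]
        by_cases hlj : l ≤ j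
        · rw [if_pos hlj, hf, Lagrange.eval_nodal, mul_comm]
        · rw [if_neg hlj, mul_zero,
            Lagrange.eval_nodal_at_node (mem_Ioi.mpr (lt_of_not_ge hlj)), zero_mul]
      · simp [hil]
    rw [Finset.sum_congr rfl (fun l _ => hterm l), ← Finset.sum_filter]
    have hIci : univ.filter (fun l : Fin N => i ≤ l) = Ici i := by
      ext l; simp
    rw [hIci]
    have hdeg : f.degree < (#(Ici i) : ℕ) → _ := fun h => divdiff (hx.injOn) f h
    by_cases hij : i ≤ j
    · have hcard : #(Ioi j) < #(Ici i) := by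
        have h1 := Fin.card_Ioi j; have h2 := Fin.card_Ici i
        have := j.isLt; have := i.isLt
        have : (i : ℕ) ≤ (j : ℕ) := hij
        omega
      have hlt : f.degree < (#(Ici i) : ℕ) := by
        rw [hf, Lagrange.degree_nodal]
        exact_mod_cast hcard
      rw [divdiff hx.injOn f hlt]
      have hnd : f.natDegree = N - 1 - (j : ℕ) := by
        rw [hf, Lagrange.natDegree_nodal, Fin.card_Ioi]
      rcases eq_or_lt_of_le hij with h | h
      · rw [if_pos h]
        have hidx : #(Ici i) - 1 = f.natDegree := by
          rw [Fin.card_Ici, hnd]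
          have := i.isLt
          have : (i : ℕ) = (j : ℕ) := congrArg Fin.val h
          omega
        rw [hidx]
        exact Lagrange.nodal_monic.coeff_natDegree
      · rw [if_neg (ne_of_lt h)]
        apply Polynomial.coeff_eq_zero_of_natDegree_lt
        rw [hnd, Fin.card_Ici]
        have := j.isLt
        have : (i : ℕ) < (j : ℕ) := h
        omega
    · rw [if_neg (fun h => hij (le_of_eq h))]
      apply Finset.sum_eq_zero
      intro l hl
      have : j < l := lt_of_not_ge (fun h => hij (le_trans (mem_Ici.mp hl) h))
      rw [Lagrange.eval_nodal_at_node (mem_Ioi.mpr this), zero_mul]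
  exact ⟨key, mul_eq_one_comm.mp key⟩
end
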